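/- arXiv:1711.09284 — 12 statements merged into one kernel-verified Lean document; each statement's English description precedes it below -/
import Mathlib

section
/- Let ξ : [0,ℓ) → X be a self-contracted curve in a metric space. If ξ(t₁), ξ(t₂) ∈ B(x,r) for some t₁ < t₂, then ξ(t) ∈ B(x,3r) for all t ∈ (t₁,t₂). -/
theorem dist_le_add_two_mul_of_dist_le {X : Type*} [PseudoMetricSpace X] {a b y : X} (x : X)
    (h : dist y b ≤ dist a b) : dist y x ≤ dist a x + 2 * dist b x :=
  calc dist y x ≤ dist y b + dist b x := dist_triangle y b x
    _ ≤ dist a b + dist b x := by gcongr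
    _ ≤ dist a x + dist x b + dist b x := by gcongr; exact dist_triangle a x b
    _ = dist a x + 2 * dist b x := by rw [dist_comm x b]; ring

theorem selfContracted_mem_ball_three_general
    {X : Type*} [MetricSpace X] {ℓ : ℝ} (ξ : ℝ → X)
    (hsc : ∀ t₁ t₂ t₃ : ℝ, 0 ≤ t₁ → t₁ ≤ t₂ → t₂ ≤ t₃ → t₃ < ℓ →
      dist (ξ t₂) (ξ t₃) ≤ dist (ξ t₁) (ξ t₃))
    {x : X} {r : ℝ} {t₁ t₂ : ℝ} (h₁ : 0 ≤ t₁) (h₂ : t₂ < ℓ)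
    (hb₁ : ξ t₁ ∈ Metric.ball x r) (hb₂ : ξ t₂ ∈ Metric.ball x r) :
    ∀ t ∈ Set.Ioo t₁ t₂, ξ t ∈ Metric.ball x (3 * r) := by
  intro t ht
  have hcontract := hsc t₁ t t₂ h₁ ht.1.le ht.2.le h₂
  rw [Metric.mem_ball] at hb₁ hb₂ ⊢
  linarith [dist_le_add_two_mul_of_dist_le x hcontract]

/-- If a self-contracted curve visits the open ball `B(x,r)` at times `t₁ < t₂`, then
it stays in `B(x,3r)` for all `t ∈ (t₁, t₂)`. -/
theorem selfContracted_mem_ball_three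
    {X : Type*} [MetricSpace X] {ℓ : ℝ} (ξ : ℝ → X)
    (hsc : ∀ t₁ t₂ t₃ : ℝ, 0 ≤ t₁ → t₁ ≤ t₂ → t₂ ≤ t₃ → t₃ < ℓ →
      dist (ξ t₂) (ξ t₃) ≤ dist (ξ t₁) (ξ t₃))
    {x : X} {r : ℝ} {t₁ t₂ : ℝ} (h₁ : 0 ≤ t₁) (h₁₂ : t₁ < t₂) (h₂ : t₂ < ℓ)
    (hb₁ : ξ t₁ ∈ Metric.ball x r) (hb₂ : ξ t₂ ∈ Metric.ball x r) :
    ∀ t ∈ Set.Ioo t₁ t₂, ξ t ∈ Metric.ball x (3 * r) :=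
  selfContracted_mem_ball_three_general ξ hsc h₁ h₂ hb₁ hb₂
end

section
/- Let ξ : [0,ℓ) → ℝⁿ be a self-contracted curve. Then for each τ ∈ [0,ℓ) and all t₁, t₂ ∈ (τ,ℓ) with ξ(t₁) ≠ ξ(τ) and ξ(t₂) ≠ ξ(τ), the Euclidean angle between ξ(t₁) − ξ(τ) and ξ(t₂) − ξ(τ) is strictly less than π/2; equivalently, ⟨ξ(t₁)−ξ(τ), ξ(t₂)−ξ(τ)⟩ > 0. -/
open InnerProductGeometry RealInnerProductSpace

/-
Fix `τ` and take `τ < s ≤ t`. Self-contractedness at `τ ≤ s ≤ t` says that `ξ s` is at least as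
close to `ξ t` as `ξ τ` is. Expanding `‖(ξ s - ξ τ) - (ξ t - ξ τ)‖² ≤ ‖ξ t - ξ τ‖²` gives
`2 ⟪ξ s - ξ τ, ξ t - ξ τ⟫ ≥ ‖ξ s - ξ τ‖² > 0`, and a positive inner product is an acute angle.
-/

section

variable {E : Type*} [NormedAddCommGroup E] [InnerProductSpace ℝ E]

theorem inner_sub_sub_pos_of_dist_le_dist {a b c : E} (h : dist b c ≤ dist a c) (hab : b ≠ a) :
    0 < ⟪b - a, c - a⟫ := by
  have hsq : ‖(b - a) - (c - a)‖ ^ 2 ≤ ‖c - a‖ ^ 2 := by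
    rw [sub_sub_sub_cancel_right, ← dist_eq_norm, ← dist_eq_norm, dist_comm c]
    gcongr
  have hpos : 0 < ‖b - a‖ ^ 2 := by
    have := norm_pos_iff.mpr (sub_ne_zero.mpr hab)
    positivity
  rw [norm_sub_sq_real] at hsq
  linarith

theorem angle_lt_pi_div_two_of_inner_pos {x y : E} (h : 0 < ⟪x, y⟫) :
    angle x y < Real.pi / 2 := by
  rw [angle, Real.arccos_lt_pi_div_two]
  exact div_pos h (h.trans_le (real_inner_le_norm x y))

end

/-- Angle estimate: for a self-contracted curve in `ℝⁿ`, directions from `ξ τ` to later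
points make pairwise angles `< π/2`; equivalently their inner product is positive. -/
theorem selfContracted_angle_lt_pi_div_two
    {n : ℕ} {ℓ : ℝ} (ξ : ℝ → EuclideanSpace ℝ (Fin n))
    (hsc : ∀ t₁ t₂ t₃ : ℝ, 0 ≤ t₁ → t₁ ≤ t₂ → t₂ ≤ t₃ → t₃ < ℓ →
      dist (ξ t₂) (ξ t₃) ≤ dist (ξ t₁) (ξ t₃))
    {τ t₁ t₂ : ℝ} (hτ : 0 ≤ τ) (ht₁ : τ < t₁) (ht₂ : τ < t₂)
    (ht₁ℓ : t₁ < ℓ) (ht₂ℓ : t₂ < ℓ)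
    (hne₁ : ξ t₁ ≠ ξ τ) (hne₂ : ξ t₂ ≠ ξ τ) :
    angle (ξ t₁ - ξ τ) (ξ t₂ - ξ τ) < Real.pi / 2 ∧
      (0 : ℝ) < inner ℝ (ξ t₁ - ξ τ) (ξ t₂ - ξ τ) := by
  have hinner : 0 < ⟪ξ t₁ - ξ τ, ξ t₂ - ξ τ⟫ := by
    rcases le_total t₁ t₂ with h₁₂ | h₂₁
    · exact inner_sub_sub_pos_of_dist_le_dist (hsc τ t₁ t₂ hτ ht₁.le h₁₂ ht₂ℓ) hne₁
    · rw [real_inner_comm]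
      exact inner_sub_sub_pos_of_dist_le_dist (hsc τ t₂ t₁ hτ ht₂.le h₂₁ ht₁ℓ) hne₂
  exact ⟨angle_lt_pi_div_two_of_inner_pos hinner, hinner⟩
end

section
/- Let f : ℝⁿ → ℝ be a C¹ quasi-convex function and ξ : [0,ℓ) → ℝⁿ a solution of the gradient flow equation ξ'(t) = −∇f(ξ(t)). Then ξ is self-contracted. -/
/-!
Along a gradient curve `f ∘ ξ` decreases, with derivative `-‖∇f(ξ t)‖²`, so `f (ξ t₃) ≤ f (ξ t)`
for `t ≤ t₃`. For a quasi-convex `f` the sublevel set `{f ≤ f (ξ t)}` is convex and contains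
`ξ t₃`; so `ξ t` maximises `f` on the segment `[ξ t, ξ t₃]`, and `⟪∇f(ξ t), ξ t₃ - ξ t⟫ ≤ 0`.
Hence `d/dt ‖ξ t - ξ t₃‖² = 2 ⟪ξ t - ξ t₃, -∇f(ξ t)⟫ ≤ 0` on `[0, t₃]`.
-/

open Set InnerProductSpace

lemma quasiconvexOn_univ_of_le_max {E : Type*} [AddCommGroup E] [Module ℝ E] {f : E → ℝ}
    (hqc : ∀ x y : E, ∀ s ∈ Ioo (0:ℝ) 1, f ((1 - s) • x + s • y) ≤ max (f x) (f y)) :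
    QuasiconvexOn ℝ univ f := by
  refine quasiconvexOn_iff_le_max.2 ⟨convex_univ, fun x _ y _ a b ha hb hab => ?_⟩
  obtain rfl : a = 1 - b := by linarith
  rcases hb.eq_or_lt with rfl | hb₀
  · simp
  rcases (show b ≤ 1 by linarith).eq_or_lt with rfl | hb₁
  · simp
  exact hqc x y b ⟨hb₀, hb₁⟩

lemma QuasiconvexOn.hasFDerivWithinAt_apply_sub_nonpos {E : Type*} [NormedAddCommGroup E]
    [NormedSpace ℝ E] {s : Set E} {f : E → ℝ} {f' : E →L[ℝ] ℝ} {x y : E}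
    (hf : QuasiconvexOn ℝ s f) (hx : x ∈ s) (hy : y ∈ s) (hd : HasFDerivWithinAt f f' s x)
    (hxy : f y ≤ f x) : f' (y - x) ≤ 0 := by
  have hseg : segment ℝ x y ⊆ {z ∈ s | f z ≤ f x} :=
    (hf (f x)).segment_subset ⟨hx, le_rfl⟩ ⟨hy, hxy⟩
  have hmax : IsMaxOn f (segment ℝ x y) x := fun z hz => (hseg hz).2
  exact hmax.localize.hasFDerivWithinAt_nonpos (hd.mono fun z hz => (hseg hz).1)
    (sub_mem_posTangentConeAt_of_segment_subset subset_rfl)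

section GradientFlow

variable {E : Type*} [NormedAddCommGroup E] [InnerProductSpace ℝ E] [CompleteSpace E]
  {f : E → ℝ} {ξ : ℝ → E} {I : Set ℝ}

lemma QuasiconvexOn.inner_gradient_sub_nonpos (hqc : QuasiconvexOn ℝ univ f)
    (hf : Differentiable ℝ f) {x y : E} (hxy : f y ≤ f x) :
    inner ℝ (gradient f x) (y - x) ≤ 0 :=
  hqc.hasFDerivWithinAt_apply_sub_nonpos (mem_univ x) (mem_univ y)
    (hf x).hasGradientAt.hasFDerivAt.hasFDerivWithinAt hxy

lemma hasDerivAt_comp_of_hasDerivAt_neg_gradient {t : ℝ} (hf : DifferentiableAt ℝ f (ξ t))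
    (hξ : HasDerivAt ξ (-gradient f (ξ t)) t) :
    HasDerivAt (f ∘ ξ) (-‖gradient f (ξ t)‖ ^ 2) t := by
  have h := hf.hasGradientAt.hasFDerivAt.comp_hasDerivAt t hξ
  rwa [toDual_apply_apply, inner_neg_right, real_inner_self_eq_norm_sq] at h

lemma antitoneOn_of_hasDerivAt_nonpos {D : Set ℝ} {g g' : ℝ → ℝ} (hD : Convex ℝ D)
    (hg : ∀ t ∈ D, HasDerivAt g (g' t) t) (hg' : ∀ t ∈ D, g' t ≤ 0) : AntitoneOn g D :=
  antitoneOn_of_hasDerivWithinAt_nonpos hD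
    (fun t ht => (hg t ht).continuousAt.continuousWithinAt)
    (fun t ht => (hg t (interior_subset ht)).hasDerivWithinAt)
    (fun t ht => hg' t (interior_subset ht))

lemma antitoneOn_comp_of_hasDerivAt_neg_gradient (hf : Differentiable ℝ f) (hI : Convex ℝ I)
    (hξ : ∀ t ∈ I, HasDerivAt ξ (-gradient f (ξ t)) t) : AntitoneOn (f ∘ ξ) I :=
  antitoneOn_of_hasDerivAt_nonpos hI
    (fun t ht => hasDerivAt_comp_of_hasDerivAt_neg_gradient (hf _) (hξ t ht))
    (fun _ _ => neg_nonpos.2 (sq_nonneg _))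

lemma QuasiconvexOn.antitoneOn_dist_of_hasDerivAt_neg_gradient (hqc : QuasiconvexOn ℝ univ f)
    (hf : Differentiable ℝ f) (hI : Convex ℝ I)
    (hξ : ∀ t ∈ I, HasDerivAt ξ (-gradient f (ξ t)) t) {τ : ℝ} (hτ : τ ∈ I) :
    AntitoneOn (fun t => dist (ξ t) (ξ τ)) (I ∩ Iic τ) := by
  have hsq : AntitoneOn (fun t => ‖ξ t - ξ τ‖ ^ 2) (I ∩ Iic τ) := by
    refine antitoneOn_of_hasDerivAt_nonpos (hI.inter (convex_Iic τ))
      (fun t ht => ((hξ t ht.1).sub_const (ξ τ)).norm_sq) fun t ht => ?_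
    have hfτ : f (ξ τ) ≤ f (ξ t) :=
      antitoneOn_comp_of_hasDerivAt_neg_gradient hf hI hξ ht.1 hτ ht.2
    have hangle := hqc.inner_gradient_sub_nonpos hf hfτ
    have hflip : inner ℝ (ξ t - ξ τ) (-gradient f (ξ t)) =
        inner ℝ (gradient f (ξ t)) (ξ τ - ξ t) := by
      rw [inner_neg_right, real_inner_comm, ← inner_neg_right, neg_sub]
    rw [hflip]
    linarith
  intro s hs t ht hst
  simpa only [dist_eq_norm, pow_le_pow_iff_left₀ (norm_nonneg _) (norm_nonneg _) two_ne_zero]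
    using hsq hs ht hst

end GradientFlow

/-- Gradient curves of a `C¹` quasi-convex function on `ℝⁿ` are self-contracted. -/
theorem gradientCurve_of_quasiconvex_selfContracted
    {n : ℕ} {ℓ : ℝ} (f : EuclideanSpace ℝ (Fin n) → ℝ)
    (hf : ContDiff ℝ 1 f)
    (hqc : ∀ x y : EuclideanSpace ℝ (Fin n), ∀ s ∈ Set.Ioo (0:ℝ) 1,
      f ((1 - s) • x + s • y) ≤ max (f x) (f y))
    (ξ : ℝ → EuclideanSpace ℝ (Fin n))
    (hξ : ∀ t ∈ Set.Ico (0:ℝ) ℓ, HasDerivAt ξ (-(gradient f (ξ t))) t) :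
    ∀ t₁ t₂ t₃ : ℝ, 0 ≤ t₁ → t₁ ≤ t₂ → t₂ ≤ t₃ → t₃ < ℓ →
      dist (ξ t₂) (ξ t₃) ≤ dist (ξ t₁) (ξ t₃) := by
  intro t₁ t₂ t₃ h0 h12 h23 h3
  have hdist := (quasiconvexOn_univ_of_le_max hqc).antitoneOn_dist_of_hasDerivAt_neg_gradient
    (hf.differentiable one_ne_zero) (convex_Ico 0 ℓ) hξ (τ := t₃) ⟨by linarith, h3⟩
  exact hdist ⟨⟨h0, by linarith⟩, h12.trans h23⟩ ⟨⟨h0.trans h12, by linarith⟩, h23⟩ h12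
end

section
/- Any subset Δ of the unit sphere 𝕊^{n−1} ⊂ ℝⁿ whose angular diameter is at most π/2 is contained in a closed angular ball of radius arccos((2·3ⁿ)⁻¹) around some unit vector v̄; more precisely there exists v̄ ∈ 𝕊^{n−1} with ⟨w, v̄⟩ > (2·3ⁿ)⁻¹ for all w ∈ Δ. -/
/-!
Let `p` be the point of minimal norm in the closed convex hull `K` of `Δ`. The variational
characterisation of the nearest point gives `‖p‖² ≤ ⟪p, w⟫` for all `w ∈ K`, so `p / ‖p‖` is a
good centre as soon as `‖p‖` is not too small. Since the vectors of `Δ` are pairwise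
non-obtuse, a convex combination `∑ cᵢ zᵢ` of them has squared norm at least `∑ cᵢ²`; by
Carathéodory at most `n + 1` points are needed, so Cauchy–Schwarz bounds this by `1 / (n + 1)`.
Hence `‖p‖ ≥ (n + 1)^(-1/2) > (2·3ⁿ)⁻¹`.
-/

open Module RealInnerProductSpace

theorem inv_card_le_sum_sq {ι : Type*} (s : Finset ι) {c : ι → ℝ} (hc : ∑ i ∈ s, c i = 1) :
    (s.card : ℝ)⁻¹ ≤ ∑ i ∈ s, c i ^ 2 := by
  have hs : s.Nonempty := Finset.nonempty_of_sum_ne_zero (by rw [hc]; exact one_ne_zero)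
  have := sq_sum_le_card_mul_sum_sq (s := s) (f := c)
  rw [hc, one_pow] at this
  rwa [inv_le_iff_one_le_mul₀' (by exact_mod_cast hs.card_pos)]

theorem sqrt_nat_add_one_lt_two_mul_three_pow (n : ℕ) : √((n : ℝ) + 1) < 2 * 3 ^ n := by
  rw [Real.sqrt_lt' (by positivity)]
  have hlin : n + 1 ≤ 2 ^ n := Nat.lt_two_pow_self
  have htwo : 2 ^ n ≤ 3 ^ n := Nat.pow_le_pow_left (by norm_num) n
  have hone : 1 ≤ 3 ^ n := Nat.one_le_pow _ _ (by norm_num)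
  exact_mod_cast (show n + 1 < (2 * 3 ^ n) ^ 2 by nlinarith)

section InnerProductSpace

variable {E : Type*} [NormedAddCommGroup E] [InnerProductSpace ℝ E]

theorem exists_mem_forall_norm_sq_le_inner {K : Set E} (hne : K.Nonempty)
    (hcomplete : IsComplete K) (hconv : Convex ℝ K) : ∃ p ∈ K, ∀ w ∈ K, ‖p‖ ^ 2 ≤ ⟪p, w⟫ := by
  obtain ⟨p, hpK, hmin⟩ := exists_norm_eq_iInf_of_complete_convex hne hcomplete hconv 0
  refine ⟨p, hpK, fun w hw => ?_⟩
  have := (norm_eq_iInf_iff_real_inner_le_zero hconv hpK).mp hmin w hw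
  rw [zero_sub, inner_neg_left, inner_sub_right, real_inner_self_eq_norm_sq] at this
  linarith

theorem sum_sq_le_norm_sum_smul_sq {ι : Type*} (s : Finset ι) {z : ι → E}
    (hz : ∀ i ∈ s, ‖z i‖ = 1) (hz_inner : ∀ i ∈ s, ∀ j ∈ s, 0 ≤ ⟪z i, z j⟫) {c : ι → ℝ}
    (hc : ∀ i ∈ s, 0 ≤ c i) : ∑ i ∈ s, c i ^ 2 ≤ ‖∑ i ∈ s, c i • z i‖ ^ 2 := by
  rw [← real_inner_self_eq_norm_sq, sum_inner]
  refine Finset.sum_le_sum fun i hi => ?_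
  have hterm : ∀ j, ⟪c i • z i, c j • z j⟫ = c i * c j * ⟪z i, z j⟫ := fun j => by
    rw [real_inner_smul_left, real_inner_smul_right, mul_assoc]
  rw [inner_sum]
  calc c i ^ 2 = ⟪c i • z i, c i • z i⟫ := by
        rw [hterm, real_inner_self_eq_norm_sq, hz i hi]; ring
    _ ≤ ∑ j ∈ s, ⟪c i • z i, c j • z j⟫ := by
        refine Finset.single_le_sum (f := fun j => ⟪c i • z i, c j • z j⟫) (fun j hj => ?_) hi
        rw [hterm]
        exact mul_nonneg (mul_nonneg (hc i hi) (hc j hj)) (hz_inner i hi j hj)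

theorem inv_finrank_add_one_le_norm_sq_of_mem_convexHull [FiniteDimensional ℝ E] {S : Set E}
    (hS : ∀ v ∈ S, ‖v‖ = 1) (hS_inner : ∀ v ∈ S, ∀ w ∈ S, 0 ≤ ⟪v, w⟫) {x : E}
    (hx : x ∈ convexHull ℝ S) : ((finrank ℝ E : ℝ) + 1)⁻¹ ≤ ‖x‖ ^ 2 := by
  obtain ⟨ι, _, z, c, hzS, hindep, hc_pos, hc_sum, rfl⟩ := eq_pos_convex_span_of_mem_convexHull hx
  have hz : ∀ i, z i ∈ S := fun i => hzS ⟨i, rfl⟩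
  have hcard : (Fintype.card ι : ℝ) ≤ finrank ℝ E + 1 := by
    exact_mod_cast hindep.card_le_finrank_succ.trans (Nat.succ_le_succ (Submodule.finrank_le _))
  have hcard_pos : (0 : ℝ) < Fintype.card ι := by
    rw [← Finset.card_univ]
    exact_mod_cast (Finset.nonempty_of_sum_ne_zero (by rw [hc_sum]; exact one_ne_zero)).card_pos
  calc ((finrank ℝ E : ℝ) + 1)⁻¹ ≤ (Fintype.card ι : ℝ)⁻¹ := inv_anti₀ hcard_pos hcard
    _ ≤ ∑ i, c i ^ 2 := inv_card_le_sum_sq _ hc_sum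
    _ ≤ ‖∑ i, c i • z i‖ ^ 2 :=
        sum_sq_le_norm_sum_smul_sq _ (fun i _ => hS _ (hz i))
          (fun i _ j _ => hS_inner _ (hz i) _ (hz j)) (fun i _ => (hc_pos i).le)

theorem exists_norm_eq_one_forall_inv_sqrt_le_inner [FiniteDimensional ℝ E] {S : Set E}
    (hne : S.Nonempty) (hS : ∀ v ∈ S, ‖v‖ = 1) (hS_inner : ∀ v ∈ S, ∀ w ∈ S, 0 ≤ ⟪v, w⟫) :
    ∃ u : E, ‖u‖ = 1 ∧ ∀ w ∈ S, (√((finrank ℝ E : ℝ) + 1))⁻¹ ≤ ⟪w, u⟫ := by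
  obtain ⟨p, hpK, hp⟩ := exists_mem_forall_norm_sq_le_inner hne.convexHull.closure
    isClosed_closure.isComplete (convex_convexHull ℝ S).closure
  have hp_sq : ((finrank ℝ E : ℝ) + 1)⁻¹ ≤ ‖p‖ ^ 2 :=
    closure_minimal (fun x => inv_finrank_add_one_le_norm_sq_of_mem_convexHull hS hS_inner)
      (isClosed_le continuous_const (continuous_norm.pow 2)) hpK
  have hp_norm : (√((finrank ℝ E : ℝ) + 1))⁻¹ ≤ ‖p‖ := by
    rw [← Real.sqrt_inv]
    exact Real.sqrt_le_iff.mpr ⟨norm_nonneg p, hp_sq⟩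
  have hp_pos : 0 < ‖p‖ := lt_of_lt_of_le (by positivity) hp_norm
  refine ⟨‖p‖⁻¹ • p, norm_smul_inv_norm (norm_pos_iff.mp hp_pos), fun w hw => ?_⟩
  rw [real_inner_smul_right, real_inner_comm]
  calc _ ≤ ‖p‖ := hp_norm
    _ = ‖p‖⁻¹ * ‖p‖ ^ 2 := by field_simp
    _ ≤ ‖p‖⁻¹ * ⟪p, w⟫ := by
        gcongr
        exact hp w (subset_closure (subset_convexHull ℝ S hw))

end InnerProductSpace

/-- Any subset of the unit sphere of `ℝⁿ` with angular diameter at most `π/2` is contained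
in a closed angular ball of radius `arccos((2·3ⁿ)⁻¹)`: there is a unit vector `vbar` with
`⟨w, vbar⟩ > (2·3ⁿ)⁻¹` for all `w` in the set. -/
theorem sphere_diam_le_pi_div_two_radius
    {n : ℕ} (hn : 0 < n) (Δ : Set (EuclideanSpace ℝ (Fin n)))
    (hΔ : ∀ v ∈ Δ, ‖v‖ = 1)
    (hdiam : ∀ v ∈ Δ, ∀ w ∈ Δ, Real.arccos (inner ℝ v w) ≤ Real.pi / 2) :
    ∃ vbar : EuclideanSpace ℝ (Fin n), ‖vbar‖ = 1 ∧
      ∀ w ∈ Δ, ((2 * 3 ^ n : ℝ))⁻¹ < inner ℝ w vbar := by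
  rcases Δ.eq_empty_or_nonempty with rfl | hne
  · exact ⟨EuclideanSpace.single ⟨0, hn⟩ 1, by simp, by simp⟩
  have hinner : ∀ v ∈ Δ, ∀ w ∈ Δ, 0 ≤ ⟪v, w⟫ := fun v hv w hw =>
    Real.arccos_le_pi_div_two.mp (hdiam v hv w hw)
  obtain ⟨u, hu, hΔu⟩ := exists_norm_eq_one_forall_inv_sqrt_le_inner hne hΔ hinner
  rw [finrank_euclideanSpace_fin] at hΔu
  exact ⟨u, hu, fun w hw =>
    (inv_strictAnti₀ (by positivity) (sqrt_nat_add_one_lt_two_mul_three_pow n)).trans_le (hΔu w hw)⟩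
end

section
/- Let ξ : [0,∞) → L²(ℝ) be defined by ξ(t) = f_t, where f_t is the indicator function of the interval [t, t+1]. Then ξ is a continuous self-contracted curve with bounded image (‖f_t‖ = 1 for all t), but ξ has infinite length. -/
/-!
The `L²` distance between `𝟙_[s,s+1]` and `𝟙_[t,t+1]` is the square root of the measure of the
symmetric difference of the two intervals, `√(2 min(|t - s|, 1))`. Being a continuous monotone
function of `|t - s|` that vanishes at `0`, it makes the curve continuous and self-contracted;
being `√2` between consecutive integer times, it makes the length along integer partitions
unbounded.
-/

open MeasureTheory Set
open scoped symmDiff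

theorem MeasureTheory.measureReal_symmDiff_eq_add_sub_inter {α : Type*} [MeasurableSpace α]
    {μ : Measure α} {s t : Set α} (hs : MeasurableSet s) (ht : MeasurableSet t)
    (h₁ : μ s ≠ ⊤ := by finiteness) (h₂ : μ t ≠ ⊤ := by finiteness) :
    μ.real (s ∆ t) = μ.real s + μ.real t - 2 * μ.real (s ∩ t) := by
  have hs' := measureReal_sdiff_add_inter ht h₁
  have ht' := measureReal_sdiff_add_inter hs h₂
  rw [inter_comm] at ht'
  rw [measureReal_symmDiff_eq hs ht h₁ h₂]
  linarith

theorem Real.volume_real_Icc_symmDiff_Icc (s t : ℝ) {a : ℝ} (ha : 0 ≤ a) :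
    volume.real (Icc s (s + a) ∆ Icc t (t + a)) = 2 * min |t - s| a := by
  have hoverlap : min (s + a) (t + a) - max s t = a - |t - s| := by
    rw [min_add_add_right, ← max_sub_min_eq_abs]; ring
  rw [measureReal_symmDiff_eq_add_sub_inter measurableSet_Icc measurableSet_Icc
      measure_Icc_lt_top.ne measure_Icc_lt_top.ne, Icc_inter_Icc,
    Real.volume_real_Icc_of_le (by linarith), Real.volume_real_Icc_of_le (by linarith),
    Real.volume_real_Icc, hoverlap]
  rcases le_total |t - s| a with h | h
  · rw [min_eq_left h, max_eq_left (by linarith)]; ring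
  · rw [min_eq_right h, max_eq_right (by linarith)]; ring

section DistanceOfTimeDifference

variable {X : Type*} [PseudoMetricSpace X] {ξ : ℝ → X} {φ : ℝ → ℝ}

theorem continuous_of_dist_eq_comp_abs_sub (hφ : Continuous φ) (hφ₀ : φ 0 = 0)
    (hξ : ∀ s t, dist (ξ s) (ξ t) = φ |t - s|) : Continuous ξ := by
  refine continuous_iff_continuousAt.2 fun x ↦ tendsto_iff_dist_tendsto_zero.2 ?_
  simp_rw [hξ]
  have hcont : Continuous fun y : ℝ ↦ φ |x - y| := by fun_prop
  simpa [hφ₀] using hcont.tendsto x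

theorem selfContracted_of_dist_eq_comp_abs_sub (hφ : Monotone φ)
    (hξ : ∀ s t, dist (ξ s) (ξ t) = φ |t - s|) (t₁ t₂ t₃ : ℝ) (h₁₂ : t₁ ≤ t₂)
    (h₂₃ : t₂ ≤ t₃) :
    dist (ξ t₂) (ξ t₃) ≤ dist (ξ t₁) (ξ t₃) := by
  rw [hξ, hξ, abs_of_nonneg (by linarith), abs_of_nonneg (by linarith)]
  exact hφ (by linarith)

end DistanceOfTimeDifference

theorem exists_partition_lt_sum_dist {X : Type*} [PseudoMetricSpace X] {ξ : ℝ → X} {c : ℝ}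
    (hc : 0 < c) (hξ : ∀ n : ℕ, c ≤ dist (ξ n) (ξ (n + 1))) (C : ℝ) :
    ∃ (k : ℕ) (t : Fin (k + 1) → ℝ), t 0 = 0 ∧ StrictMono t ∧
      C < ∑ i : Fin k, dist (ξ (t i.castSucc)) (ξ (t i.succ)) := by
  obtain ⟨k, hk⟩ := exists_nat_gt (C / c)
  refine ⟨k, fun i ↦ (i : ℕ), by simp, fun i j hij ↦ by simpa using hij, ?_⟩
  calc C < k * c := (div_lt_iff₀ hc).1 hk
    _ = ∑ _i : Fin k, c := by simp
    _ ≤ _ := Finset.sum_le_sum fun i _ ↦ by simpa using hξ i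

noncomputable def unitIntervalIndicatorLp (t : ℝ) : Lp ℝ 2 (volume : Measure ℝ) :=
  indicatorConstLp 2 (measurableSet_Icc (a := t) (b := t + 1)) measure_Icc_lt_top.ne 1

theorem eq_unitIntervalIndicatorLp {ξ : ℝ → Lp ℝ 2 (volume : Measure ℝ)}
    (hξ : ∀ t : ℝ, (ξ t : ℝ → ℝ) =ᵐ[volume] (Icc t (t + 1)).indicator fun _ ↦ (1 : ℝ)) :
    ξ = unitIntervalIndicatorLp :=
  funext fun t ↦ Lp.ext ((hξ t).trans indicatorConstLp_coeFn.symm)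

theorem norm_unitIntervalIndicatorLp (t : ℝ) : ‖unitIntervalIndicatorLp t‖ = 1 := by
  simp [unitIntervalIndicatorLp, norm_indicatorConstLp]

theorem dist_unitIntervalIndicatorLp (s t : ℝ) :
    dist (unitIntervalIndicatorLp s) (unitIntervalIndicatorLp t) = √(2 * min |t - s| 1) := by
  rw [unitIntervalIndicatorLp, unitIntervalIndicatorLp, dist_indicatorConstLp_eq_norm,
    norm_indicatorConstLp (by norm_num) (by norm_num),
    Real.volume_real_Icc_symmDiff_Icc s t zero_le_one, Real.sqrt_eq_rpow]
  simp

/-- The curve `t ↦ 𝟙_{[t,t+1]}` in `L²(ℝ)` is continuous, self-contracted and bounded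
(of norm one), but has infinite length. -/
theorem indicator_curve_selfContracted_infinite_length
    (ξ : ℝ → Lp ℝ 2 (volume : Measure ℝ))
    (hξ : ∀ t : ℝ, (ξ t : ℝ → ℝ) =ᵐ[volume]
      (Set.Icc t (t + 1)).indicator (fun _ => (1 : ℝ))) :
    Continuous ξ ∧
    (∀ t₁ t₂ t₃ : ℝ, t₁ ≤ t₂ → t₂ ≤ t₃ →
      dist (ξ t₂) (ξ t₃) ≤ dist (ξ t₁) (ξ t₃)) ∧
    (∀ t : ℝ, ‖ξ t‖ = 1) ∧
    (∀ C : ℝ, ∃ (k : ℕ) (t : Fin (k + 1) → ℝ), t 0 = 0 ∧ StrictMono t ∧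
      C < ∑ i : Fin k, dist (ξ (t i.castSucc)) (ξ (t i.succ))) := by
  obtain rfl := eq_unitIntervalIndicatorLp hξ
  set φ : ℝ → ℝ := fun r ↦ √(2 * min r 1)
  have hdist : ∀ s t, dist (unitIntervalIndicatorLp s) (unitIntervalIndicatorLp t) = φ |t - s| :=
    dist_unitIntervalIndicatorLp
  have hmono : Monotone φ := fun r r' h ↦ Real.sqrt_le_sqrt (by gcongr)
  have hstep (n : ℕ) :
      1 ≤ dist (unitIntervalIndicatorLp n) (unitIntervalIndicatorLp (n + 1)) := by
    simp [hdist, φ]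
  exact ⟨continuous_of_dist_eq_comp_abs_sub (by fun_prop) (by simp [φ]) hdist,
    selfContracted_of_dist_eq_comp_abs_sub hmono hdist, norm_unitIntervalIndicatorLp,
    exists_partition_lt_sum_dist one_pos hstep⟩
end

section
/- Every self-contracted curve ξ : [0,ℓ) → ℝⁿ with bounded image has finite length; moreover L(ξ) ≤ Cₙ · diam(ξ([0,ℓ))) where Cₙ depends only on n. -/
/-
For t ≤ s ≤ s', self-contractedness says ‖ξ(s) - ξ(s')‖ ≤ ‖ξ(t) - ξ(s')‖, which forces
⟪ξ(s) - ξ(t), ξ(s') - ξ(t)⟫ ≥ 0: seen from ξ(t), later points span pairwise non-obtuse angles.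
Unit vectors with pairwise nonnegative inner products lie in a cone of fixed aperture: by
Carathéodory, the point x of least norm in their convex hull is a convex combination of at most
n + 1 of them, so ‖x‖² ≥ 1 / (n + 1), while ⟪u, x⟫ ≥ ‖x‖² for each of them. Rounding the axis
x / ‖x‖ to a finite net W of the unit ball, each step of a partition gets a direction w ∈ W along
which every later point advances by at least c times its distance. Steps sharing w have total
length at most 2 / c times the increase of ⟪ξ, w⟫, hence at most (2 / c) · diam, and summing over
W gives the bound with C = |W| · 2 / c.
-/

open scoped RealInnerProductSpace

def SelfContracted {α β : Type*} [Preorder α] [PseudoMetricSpace β] (f : α → β) : Prop :=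
  ∀ ⦃a b c⦄, a ≤ b → b ≤ c → dist (f b) (f c) ≤ dist (f a) (f c)

namespace SelfContracted

variable {α β : Type*} [Preorder α] [PseudoMetricSpace β] {f : α → β}

theorem comp_monotone {γ : Type*} [Preorder γ] (hf : SelfContracted f) {m : γ → α}
    (hm : Monotone m) : SelfContracted (f ∘ m) :=
  fun _ _ _ hab hbc => hf (hm hab) (hm hbc)

theorem dist_le_two_mul_dist (hf : SelfContracted f) {a b c : α} (hab : a ≤ b) (hbc : b ≤ c) :
    dist (f a) (f b) ≤ 2 * dist (f a) (f c) := by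
  linarith [dist_triangle_right (f a) (f b) (f c), hf hab hbc]

end SelfContracted

theorem exists_le_and_sum_le_sub {α : Type*} [LinearOrder α] {d g : α → ℝ} {b : α}
    {S : Finset α} (hS : ∀ i ∈ S, i < b) (h : ∀ i ∈ S, ∀ j, i < j → j ≤ b → d i ≤ g j - g i) :
    ∃ a ≤ b, ∑ i ∈ S, d i ≤ g b - g a := by
  classical
  induction S using Finset.induction_on_max generalizing b with
  | empty => exact ⟨b, le_rfl, by simp⟩
  | insert a S haS ih =>
    have hab : a < b := hS a (Finset.mem_insert_self a S)
    obtain ⟨a', ha'a, ha'⟩ := ih (b := a) haS fun i hi j hij hja =>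
      h i (Finset.mem_insert_of_mem hi) j hij (hja.trans hab.le)
    have hda := h a (Finset.mem_insert_self a S) b hab le_rfl
    refine ⟨a', ha'a.trans hab.le, ?_⟩
    rw [Finset.sum_insert fun haS' => (haS a haS').false]
    linarith

section InnerProductSpace

variable {E : Type*} [NormedAddCommGroup E] [InnerProductSpace ℝ E]

namespace SelfContracted

theorem inner_sub_nonneg {α : Type*} [Preorder α] {f : α → E} (hf : SelfContracted f)
    {a b c : α} (hab : a ≤ b) (hbc : b ≤ c) : 0 ≤ ⟪f b - f a, f c - f a⟫ := by
  have h : ‖(f b - f a) - (f c - f a)‖ ≤ ‖f c - f a‖ := by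
    rw [sub_sub_sub_cancel_right, ← dist_eq_norm, ← dist_eq_norm, dist_comm (f c)]
    exact hf hab hbc
  nlinarith [norm_sub_sq_real (f b - f a) (f c - f a), norm_nonneg (f b - f a - (f c - f a)),
    sq_nonneg ‖f b - f a‖]

variable {P : ℕ → E}

theorem sum_dist_succ_le_of_forall_mul_norm_le_inner (hP : SelfContracted P) {c D : ℝ}
    (hc : 0 < c) (hD : ∀ i j, dist (P i) (P j) ≤ D) {w : E} (hw : ‖w‖ ≤ 1) {k : ℕ}
    {S : Finset ℕ} (hSk : ∀ i ∈ S, i < k)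
    (hcone : ∀ i ∈ S, ∀ j, i < j → j ≤ k → c * ‖P j - P i‖ ≤ ⟪P j - P i, w⟫) :
    ∑ i ∈ S, dist (P i) (P (i + 1)) ≤ 2 / c * D := by
  obtain ⟨a, -, ha⟩ := exists_le_and_sum_le_sub (g := fun j => 2 / c * ⟪P j, w⟫) hSk
    fun i hi j hij hjk => by
      calc dist (P i) (P (i + 1)) ≤ 2 * dist (P i) (P j) :=
            hP.dist_le_two_mul_dist (Nat.le_succ i) hij
        _ = 2 / c * (c * ‖P j - P i‖) := by rw [dist_eq_norm']; field_simp
        _ ≤ 2 / c * ⟪P j - P i, w⟫ := by gcongr; exact hcone i hi j hij hjk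
        _ = 2 / c * ⟪P j, w⟫ - 2 / c * ⟪P i, w⟫ := by rw [inner_sub_left, mul_sub]
  refine ha.trans ?_
  rw [← mul_sub, ← inner_sub_left]
  gcongr
  calc ⟪P k - P a, w⟫ ≤ ‖P k - P a‖ * ‖w‖ := real_inner_le_norm _ _
    _ ≤ ‖P k - P a‖ * 1 := by gcongr
    _ ≤ D := by rw [mul_one, ← dist_eq_norm]; exact hD k a

end SelfContracted

section FiniteDimensional

variable [FiniteDimensional ℝ E]

theorem one_le_mul_norm_sq_of_mem_convexHull {s : Set E} (hs : ∀ u ∈ s, ‖u‖ = 1)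
    (hs₀ : ∀ u ∈ s, ∀ v ∈ s, 0 ≤ ⟪u, v⟫) {x : E} (hx : x ∈ convexHull ℝ s) :
    1 ≤ (Module.finrank ℝ E + 1) * ‖x‖ ^ 2 := by
  obtain ⟨ι, _, z, w, hzs, hz, hw, hw₁, rfl⟩ := eq_pos_convex_span_of_mem_convexHull hx
  have hzs' : ∀ i, z i ∈ s := fun i => hzs (Set.mem_range_self i)
  have hcard : (Fintype.card ι : ℝ) ≤ Module.finrank ℝ E + 1 := by
    exact_mod_cast hz.card_le_finrank_succ.trans
      (Nat.add_le_add_right (Submodule.finrank_le _) 1)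
  have hdiag : ∑ i, w i ^ 2 ≤ ‖∑ i, w i • z i‖ ^ 2 := by
    rw [← real_inner_self_eq_norm_sq, sum_inner]
    refine Finset.sum_le_sum fun i _ => ?_
    rw [inner_sum]
    calc w i ^ 2 = ⟪w i • z i, w i • z i⟫ := by
          rw [real_inner_smul_left, real_inner_smul_right, real_inner_self_eq_norm_sq,
            hs _ (hzs' i)]
          ring
      _ ≤ ∑ j, ⟪w i • z i, w j • z j⟫ :=
          Finset.single_le_sum (f := fun j => ⟪w i • z i, w j • z j⟫) (fun j _ => by
            rw [real_inner_smul_left, real_inner_smul_right]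
            exact mul_nonneg (hw i).le (mul_nonneg (hw j).le (hs₀ _ (hzs' i) _ (hzs' j))))
            (Finset.mem_univ i)
  have hcs := sq_sum_le_card_mul_sum_sq (s := Finset.univ) (f := w)
  rw [hw₁, Finset.card_univ] at hcs
  calc (1 : ℝ) = 1 ^ 2 := (one_pow 2).symm
    _ ≤ Fintype.card ι * ∑ i, w i ^ 2 := by exact_mod_cast hcs
    _ ≤ (Module.finrank ℝ E + 1) * ‖∑ i, w i • z i‖ ^ 2 :=
        mul_le_mul hcard hdiag (Finset.sum_nonneg fun i _ => sq_nonneg _) (by positivity)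

theorem exists_one_le_mul_inner_of_norm_eq_one {s : Set E} (hfin : s.Finite)
    (hs : ∀ u ∈ s, ‖u‖ = 1) (hs₀ : ∀ u ∈ s, ∀ v ∈ s, 0 ≤ ⟪u, v⟫) :
    ∃ e : E, ‖e‖ ≤ 1 ∧ ∀ u ∈ s, 1 ≤ √(Module.finrank ℝ E + 1) * ⟪u, e⟫ := by
  rcases s.eq_empty_or_nonempty with rfl | hne
  · exact ⟨0, by simp, by simp⟩
  obtain ⟨v, hvK, hv⟩ := exists_norm_eq_iInf_of_complete_convex
    (hne.mono (subset_convexHull ℝ s)) (hfin.isCompact_convexHull ℝ).isComplete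
    (convex_convexHull ℝ s) 0
  have hmin := (norm_eq_iInf_iff_real_inner_le_zero (convex_convexHull ℝ s) hvK).1 hv
  have hlow : 1 ≤ √(Module.finrank ℝ E + 1) * ‖v‖ := by
    rw [← Real.sqrt_sq (norm_nonneg v), ← Real.sqrt_mul (by positivity)]
    exact Real.one_le_sqrt.2 (one_le_mul_norm_sq_of_mem_convexHull hs hs₀ hvK)
  have hv₀ : v ≠ 0 := by
    rintro rfl
    simp only [norm_zero, mul_zero] at hlow
    linarith
  refine ⟨‖v‖⁻¹ • v, (norm_smul_inv_norm hv₀).le, fun u hu => ?_⟩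
  have hvu : ‖v‖ ^ 2 ≤ ⟪u, v⟫ := by
    have := hmin u (subset_convexHull ℝ s hu)
    rw [zero_sub, inner_neg_left, inner_sub_right, real_inner_self_eq_norm_sq,
      real_inner_comm] at this
    linarith
  have hvpos : 0 < ‖v‖ := norm_pos_iff.2 hv₀
  rw [real_inner_smul_right]
  calc 1 ≤ √(Module.finrank ℝ E + 1) * ‖v‖ := hlow
    _ ≤ √(Module.finrank ℝ E + 1) * (‖v‖⁻¹ * ⟪u, v⟫) := by
        gcongr
        rw [le_inv_mul_iff₀ hvpos, ← sq]
        exact hvu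

theorem exists_norm_le_mul_inner {s : Set E} (hfin : s.Finite)
    (hs₀ : ∀ x ∈ s, ∀ y ∈ s, 0 ≤ ⟪x, y⟫) :
    ∃ e : E, ‖e‖ ≤ 1 ∧ ∀ x ∈ s, ‖x‖ ≤ √(Module.finrank ℝ E + 1) * ⟪x, e⟫ := by
  set normalize : E → E := fun x => ‖x‖⁻¹ • x
  obtain ⟨e, he, hse⟩ := exists_one_le_mul_inner_of_norm_eq_one
    ((hfin.sdiff (t := {0})).image normalize)
    (by
      rintro _ ⟨x, ⟨-, hx⟩, rfl⟩
      exact norm_smul_inv_norm (by simpa using hx))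
    (by
      rintro _ ⟨x, ⟨hx, -⟩, rfl⟩ _ ⟨y, ⟨hy, -⟩, rfl⟩
      simp only [normalize, real_inner_smul_left, real_inner_smul_right]
      have := hs₀ x hx y hy
      positivity)
  refine ⟨e, he, fun x hx => ?_⟩
  rcases eq_or_ne x 0 with rfl | hx₀
  · simp
  have := hse (normalize x) ⟨x, ⟨hx, hx₀⟩, rfl⟩
  simp only [normalize, real_inner_smul_left] at this
  have hpos : 0 < ‖x‖ := norm_pos_iff.2 hx₀
  calc ‖x‖ = ‖x‖ * 1 := (mul_one _).symm
    _ ≤ ‖x‖ * (√(Module.finrank ℝ E + 1) * (‖x‖⁻¹ * ⟪x, e⟫)) := by gcongr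
    _ = √(Module.finrank ℝ E + 1) * ⟪x, e⟫ := by field_simp

theorem exists_finset_forall_mul_norm_le_inner :
    ∃ c > 0, ∃ W : Finset E, (∀ w ∈ W, ‖w‖ ≤ 1) ∧ ∀ s : Set E, s.Finite →
      (∀ x ∈ s, ∀ y ∈ s, 0 ≤ ⟪x, y⟫) → ∃ w ∈ W, ∀ x ∈ s, c * ‖x‖ ≤ ⟪x, w⟫ := by
  set r := √(Module.finrank ℝ E + 1)
  have hr : 0 < r := Real.sqrt_pos.2 (by positivity)
  obtain ⟨T, hTball, hTfin, hT⟩ := Metric.finite_approx_of_totallyBounded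
    (isCompact_closedBall (0 : E) 1).totallyBounded (1 / (2 * r)) (by positivity)
  refine ⟨1 / (2 * r), by positivity, hTfin.toFinset, fun w hw => ?_, fun s hfin hs₀ => ?_⟩
  · simpa using hTball (hTfin.mem_toFinset.1 hw)
  obtain ⟨e, he, hse⟩ := exists_norm_le_mul_inner hfin hs₀
  obtain ⟨w, hwT, hew⟩ := Set.mem_iUnion₂.1 (hT (mem_closedBall_zero_iff.2 he))
  refine ⟨w, hTfin.mem_toFinset.2 hwT, fun x hx => ?_⟩
  have hxe : ‖x‖ / r ≤ ⟪x, e⟫ := by rw [div_le_iff₀' hr]; exact hse x hx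
  have hxew : ⟪x, e - w⟫ ≤ ‖x‖ * (1 / (2 * r)) :=
    (real_inner_le_norm _ _).trans
      (by gcongr; rw [← dist_eq_norm]; exact (Metric.mem_ball.1 hew).le)
  calc 1 / (2 * r) * ‖x‖ = ‖x‖ / r - ‖x‖ * (1 / (2 * r)) := by field_simp; ring
    _ ≤ ⟪x, e⟫ - ⟪x, e - w⟫ := by linarith
    _ = ⟪x, w⟫ := by rw [inner_sub_right]; ring

theorem SelfContracted.exists_sum_dist_succ_le :
    ∃ C, ∀ P : ℕ → E, SelfContracted P → ∀ D, (∀ i j, dist (P i) (P j) ≤ D) →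
      ∀ k, ∑ i ∈ Finset.range k, dist (P i) (P (i + 1)) ≤ C * D := by
  classical
  obtain ⟨c, hc, W, hW, hcone⟩ := exists_finset_forall_mul_norm_le_inner (E := E)
  refine ⟨W.card * (2 / c), fun P hP D hD k => ?_⟩
  have hdir : ∀ i, ∃ w ∈ W, ∀ j ∈ Set.Ioc i k, c * ‖P j - P i‖ ≤ ⟪P j - P i, w⟫ := fun i => by
    obtain ⟨w, hwW, hw⟩ := hcone ((fun j => P j - P i) '' Set.Ioc i k)
      ((Set.finite_Ioc i k).image _) (by
        rintro _ ⟨j, hj, rfl⟩ _ ⟨j', hj', rfl⟩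
        rcases le_total j j' with hjj' | hjj'
        · exact hP.inner_sub_nonneg hj.1.le hjj'
        · rw [real_inner_comm]; exact hP.inner_sub_nonneg hj'.1.le hjj')
    exact ⟨w, hwW, fun j hj => hw _ ⟨j, hj, rfl⟩⟩
  choose w hwW hw using hdir
  rw [← Finset.sum_fiberwise_of_maps_to (g := w) fun i _ => hwW i]
  calc ∑ v ∈ W, ∑ i ∈ Finset.range k with w i = v, dist (P i) (P (i + 1))
      ≤ ∑ v ∈ W, 2 / c * D := Finset.sum_le_sum fun v hv =>
        hP.sum_dist_succ_le_of_forall_mul_norm_le_inner hc hD (hW v hv)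
          (fun i hi => Finset.mem_range.1 (Finset.mem_filter.1 hi).1)
          fun i hi j hij hjk => (Finset.mem_filter.1 hi).2 ▸ hw i j ⟨hij, hjk⟩
    _ = W.card * (2 / c) * D := by rw [Finset.sum_const, nsmul_eq_mul, mul_assoc]

end FiniteDimensional

end InnerProductSpace

/-- Rectifiability in `ℝⁿ`: there is a constant `C` depending only on `n` such that every
bounded self-contracted curve `ξ : [0,ℓ) → ℝⁿ` has length at most `C · diam(ξ([0,ℓ)))`. -/
theorem selfContracted_rectifiable_euclidean (n : ℕ) :
    ∃ C : ℝ, ∀ (ℓ : ℝ) (ξ : ℝ → EuclideanSpace ℝ (Fin n)),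
      (∀ t₁ t₂ t₃ : ℝ, 0 ≤ t₁ → t₁ ≤ t₂ → t₂ ≤ t₃ → t₃ < ℓ →
        dist (ξ t₂) (ξ t₃) ≤ dist (ξ t₁) (ξ t₃)) →
      Bornology.IsBounded (ξ '' Set.Ico 0 ℓ) →
      ∀ (k : ℕ) (t : Fin (k + 1) → ℝ), t 0 = 0 → StrictMono t → t (Fin.last k) < ℓ →
        ∑ i : Fin k, dist (ξ (t i.castSucc)) (ξ (t i.succ)) ≤
          C * Metric.diam (ξ '' Set.Ico 0 ℓ) := by
  obtain ⟨C, hC⟩ := SelfContracted.exists_sum_dist_succ_le (E := EuclideanSpace ℝ (Fin n))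
  refine ⟨C, fun ℓ ξ hξ hbdd k t ht₀ ht hlast => ?_⟩
  have hξ' : SelfContracted fun s : Set.Ico 0 ℓ => ξ s :=
    fun a b c hab hbc => hξ a b c a.2.1 hab hbc c.2.2
  have hmem : ∀ i, t i ∈ Set.Ico 0 ℓ := fun i =>
    ⟨ht₀ ▸ ht.monotone (Fin.zero_le i), (ht.monotone (Fin.le_last i)).trans_lt hlast⟩
  set m : ℕ → Set.Ico 0 ℓ := fun i => ⟨t (Fin.clamp i k), hmem _⟩
  have hm : Monotone m := fun i j hij =>
    Subtype.mk_le_mk.2 (ht.monotone (Fin.mk_le_mk.2 (min_le_min_right k hij)))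
  have hsum := hC _ (hξ'.comp_monotone hm) _
    (fun i j => Metric.dist_le_diam_of_mem hbdd ⟨_, (m i).2, rfl⟩ ⟨_, (m j).2, rfl⟩) k
  have hcastSucc (i : Fin k) : Fin.clamp i k = i.castSucc := Fin.ext (min_eq_left (by omega))
  have hsucc (i : Fin k) : Fin.clamp (i + 1) k = i.succ := Fin.ext (min_eq_left i.2)
  rw [← Fin.sum_univ_eq_sum_range] at hsum
  simpa only [Function.comp_apply, m, hcastSucc, hsucc] using hsum
end

section
/- Let ξ : [0,ℓ) → ℝ be a self-contracted curve in the real line with bounded image. Then L(ξ) ≤ 3 · diam(ξ([0,ℓ))). -/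
/-!
Along a self-contracted sequence of reals, a step from `a` to `b` forces every later point to lie
beyond the midpoint of `a` and `b`. Dropping the first point therefore shrinks the diameter of the
set of remaining values by at least half the step, so the steps sum to at most twice the diameter.
-/

open Metric Set

def IsSelfContracted {ι α : Type*} [Preorder ι] [PseudoMetricSpace α] (x : ι → α) : Prop :=
  ∀ ⦃a b c : ι⦄, a ≤ b → b ≤ c → dist (x b) (x c) ≤ dist (x a) (x c)

theorem IsSelfContracted.comp_monotone {ι κ α : Type*} [Preorder ι] [Preorder κ]
    [PseudoMetricSpace α] {x : ι → α} (hx : IsSelfContracted x) {f : κ → ι} (hf : Monotone f) :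
    IsSelfContracted (x ∘ f) :=
  fun _ _ _ hab hbc => hx (hf hab) (hf hbc)

theorem add_div_two_le_of_abs_sub_le {a b c : ℝ} (hab : a < b) (h : |b - c| ≤ |a - c|) :
    (a + b) / 2 ≤ c := by
  have hsq := sq_le_sq.mpr h
  nlinarith

theorem le_add_div_two_of_abs_sub_le {a b c : ℝ} (hba : b < a) (h : |b - c| ≤ |a - c|) :
    c ≤ (a + b) / 2 := by
  have hsq := sq_le_sq.mpr h
  nlinarith

namespace Real

variable {s t : Set ℝ} {a c : ℝ}

theorem diam_add_sub_le_diam_of_forall_le (ht : Bornology.IsBounded t) (hs : s.Nonempty)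
    (hst : s ⊆ t) (ha : a ∈ t) (hc : ∀ y ∈ s, c ≤ y) : diam s + (c - a) ≤ diam t := by
  rw [Real.diam_eq (ht.subset hst), Real.diam_eq ht]
  have hsup : sSup s ≤ sSup t := csSup_le_csSup ht.bddAbove hs hst
  have hinf : c ≤ sInf s := le_csInf hs hc
  have hat : sInf t ≤ a := csInf_le ht.bddBelow ha
  linarith

theorem diam_add_sub_le_diam_of_forall_ge (ht : Bornology.IsBounded t) (hs : s.Nonempty)
    (hst : s ⊆ t) (ha : a ∈ t) (hc : ∀ y ∈ s, y ≤ c) : diam s + (a - c) ≤ diam t := by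
  rw [Real.diam_eq (ht.subset hst), Real.diam_eq ht]
  have hinf : sInf t ≤ sInf s := csInf_le_csInf ht.bddBelow hs hst
  have hsup : sSup s ≤ c := csSup_le hs hc
  have hat : a ≤ sSup t := le_csSup ht.bddAbove ha
  linarith

end Real

namespace IsSelfContracted

variable {n : ℕ} {x : Fin (n + 2) → ℝ}

theorem dist_div_two_add_diam_tail_le (hx : IsSelfContracted x) :
    dist (x 0) (x 1) / 2 + diam (range (x ∘ Fin.succ)) ≤ diam (range x) := by
  have hbdd : Bornology.IsBounded (range x) := (finite_range x).isBounded
  have htail : range (x ∘ Fin.succ) ⊆ range x := range_comp_subset_range Fin.succ x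
  have hne : (range (x ∘ Fin.succ)).Nonempty := range_nonempty _
  have hlater : ∀ y ∈ range (x ∘ Fin.succ), |x 1 - y| ≤ |x 0 - y| := by
    rintro _ ⟨j, rfl⟩
    exact hx (Fin.zero_le 1) (Fin.succ_le_succ_iff.mpr (Fin.zero_le j))
  rcases lt_trichotomy (x 0) (x 1) with hlt | heq | hgt
  · have hdiam := Real.diam_add_sub_le_diam_of_forall_le hbdd hne htail (mem_range_self 0)
      fun y hy => add_div_two_le_of_abs_sub_le hlt (hlater y hy)
    rw [Real.dist_eq, abs_of_neg (sub_neg.mpr hlt)]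
    linarith
  · rw [heq, dist_self, zero_div, zero_add]
    exact diam_mono htail hbdd
  · have hdiam := Real.diam_add_sub_le_diam_of_forall_ge hbdd hne htail (mem_range_self 0)
      fun y hy => le_add_div_two_of_abs_sub_le hgt (hlater y hy)
    rw [Real.dist_eq, abs_of_pos (sub_pos.mpr hgt)]
    linarith

end IsSelfContracted

theorem IsSelfContracted.sum_dist_le_two_mul_diam :
    ∀ {n : ℕ} {x : Fin (n + 1) → ℝ}, IsSelfContracted x →
      ∑ i : Fin n, dist (x i.castSucc) (x i.succ) ≤ 2 * diam (range x)
  | 0, _, _ => by simpa using diam_nonneg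
  | n + 1, x, hx => by
    have hhead := hx.dist_div_two_add_diam_tail_le
    have htail := (hx.comp_monotone Fin.strictMono_succ.monotone).sum_dist_le_two_mul_diam
    simp only [Function.comp_apply] at htail
    rw [Fin.sum_univ_succ]
    simp only [Fin.castSucc_zero, Fin.succ_zero_eq_one, ← Fin.succ_castSucc]
    linarith

/-- A bounded self-contracted curve in the real line has length at most
`3 · diam(ξ([0,ℓ)))`. -/
theorem selfContracted_rectifiable_real
    {ℓ : ℝ} (ξ : ℝ → ℝ)
    (hsc : ∀ t₁ t₂ t₃ : ℝ, 0 ≤ t₁ → t₁ ≤ t₂ → t₂ ≤ t₃ → t₃ < ℓ →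
      dist (ξ t₂) (ξ t₃) ≤ dist (ξ t₁) (ξ t₃))
    (hbdd : Bornology.IsBounded (ξ '' Set.Ico 0 ℓ)) :
    ∀ (k : ℕ) (t : Fin (k + 1) → ℝ), t 0 = 0 → StrictMono t → t (Fin.last k) < ℓ →
      ∑ i : Fin k, dist (ξ (t i.castSucc)) (ξ (t i.succ)) ≤
        3 * Metric.diam (ξ '' Set.Ico 0 ℓ) := by
  intro k t ht0 hmono hlast
  have ht : ∀ i, t i ∈ Ico 0 ℓ := fun i =>
    ⟨ht0 ▸ hmono.monotone (Fin.zero_le i), (hmono.monotone (Fin.le_last i)).trans_lt hlast⟩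
  have hξ : IsSelfContracted fun s : Ico 0 ℓ => ξ s :=
    fun a _ c hab hbc => hsc a _ c a.2.1 hab hbc c.2.2
  let τ : Fin (k + 1) → Ico 0 ℓ := fun i => ⟨t i, ht i⟩
  calc ∑ i : Fin k, dist (ξ (t i.castSucc)) (ξ (t i.succ))
      ≤ 2 * diam (range fun i => ξ (t i)) :=
        (hξ.comp_monotone (f := τ) fun _ _ hij => hmono.monotone hij).sum_dist_le_two_mul_diam
    _ ≤ 2 * diam (ξ '' Ico 0 ℓ) := by
        gcongr
        exact diam_mono (range_subset_iff.2 fun i => mem_image_of_mem ξ (ht i)) hbdd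
    _ ≤ 3 * diam (ξ '' Ico 0 ℓ) := by linarith [diam_nonneg (s := ξ '' Ico 0 ℓ)]
end

section
/- Let (X,d) be a complete CAT(0) space and f : X → ℝ a lower semi-continuous quasi-convex function bounded below. Then for every x ∈ X and τ > 0, the set J^f_τ(x) of minimizers of z ↦ f(z) + d²(x,z)/(2τ) is nonempty. -/
/-!
Minimizing sequences of `F z = f z + d²(x, z) / (2τ)` need not be Cauchy, since `f` is only
quasi-convex. Among the `ε`-minimizers of `F`, however, those whose distance to `x` is almost
minimal do form a Cauchy family: if `u`, `v` are such points, quasi-convexity puts the midpoint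
`m` below `max (f u) (f v)`, so `m` is in competition with `u` or `v` and cannot be much closer
to `x`; the CAT(0) inequality `d²(x, m) ≤ (d²(x, u) + d²(x, v)) / 2 - d²(u, v) / 4` then forces
`d(u, v)` to be small. Completeness and lower semicontinuity finish the argument.
-/

open Filter Topology Metric Set

lemma IsGLB.exists_le_add {ι : Type*} {F : ι → ℝ} {l : ℝ} (hl : IsGLB (range F) l) {ε : ℝ}
    (hε : 0 < ε) : ∃ i, F i ≤ l + ε := by
  obtain ⟨_, ⟨i, rfl⟩, -, hi⟩ := hl.exists_between (lt_add_of_pos_right l hε)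
  exact ⟨i, hi.le⟩

/-- `Q n` is the infimum of `g` over the `ε n`-minimizers of `F`, and `R` its limit. -/
lemma exists_tendsto_of_sublevel_lowerBounds {ι : Type*} {F g : ι → ℝ} {l : ℝ}
    (hl : IsGLB (range F) l)
    (hg_below : BddBelow (range g)) (hg_above : ∀ t, BddAbove (g '' {w | F w ≤ t}))
    {ε : ℕ → ℝ} (hε_pos : ∀ n, 0 < ε n) (hε_anti : Antitone ε) :
    ∃ Q : ℕ → ℝ, ∃ R : ℝ, Tendsto Q atTop (𝓝 R) ∧
      (∀ n, Q n ∈ lowerBounds (g '' {w | F w ≤ l + ε n})) ∧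
      ∀ n, ∃ w, F w ≤ l + ε n ∧ g w ≤ R + ε n := by
  set S : ℕ → Set ι := fun n => {w | F w ≤ l + ε n}
  have hS : Antitone S := fun m n h w (hw : F w ≤ l + ε n) =>
    show F w ≤ l + ε m by linarith [hε_anti h]
  have hQ : ∀ n, IsGLB (g '' S n) (sInf (g '' S n)) := fun n =>
    isGLB_csInf (Nonempty.image g (hl.exists_le_add (hε_pos n)))
      (hg_below.mono (image_subset_range _ _))
  have hQ_mono : Monotone fun n => sInf (g '' S n) := fun m n h =>
    (hQ n).2 (lowerBounds_mono_set (image_mono (hS h)) (hQ m).1)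
  have hQ_bdd : BddAbove (range fun n => sInf (g '' S n)) := by
    obtain ⟨B, hB⟩ := hg_above (l + ε 0)
    refine ⟨B, ?_⟩
    rintro _ ⟨n, rfl⟩
    obtain ⟨w, hw⟩ := hl.exists_le_add (hε_pos n)
    exact ((hQ n).1 ⟨w, hw, rfl⟩).trans (hB ⟨w, hS (Nat.zero_le n) hw, rfl⟩)
  refine ⟨_, _, tendsto_atTop_ciSup hQ_mono hQ_bdd, fun n => (hQ n).1, fun n => ?_⟩
  obtain ⟨_, ⟨w, hw, rfl⟩, -, hgw⟩ := (hQ n).exists_between (lt_add_of_pos_right _ (hε_pos n))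
  exact ⟨w, hw, hgw.le.trans (add_le_add_left (le_ciSup hQ_bdd n) _)⟩

section

variable {X : Type*} [MetricSpace X]

lemma exists_mem_iInter_of_dist_sq_le [CompleteSpace X] {U : ℕ → Set X} {b : ℕ → ℝ}
    (hU : Antitone U) (hU_closed : ∀ n, IsClosed (U n)) (hU_ne : ∀ n, (U n).Nonempty)
    (hdist : ∀ n, ∀ u ∈ U n, ∀ v ∈ U n, dist u v ^ 2 ≤ b n)
    (hb : Tendsto b atTop (𝓝 0)) :
    (⋂ n, U n).Nonempty := by
  have hdist' : ∀ n, ∀ u ∈ U n, ∀ v ∈ U n, dist u v ≤ √(b n) :=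
    fun n u hu v hv => Real.le_sqrt_of_sq_le (hdist n u hu v hv)
  refine nonempty_iInter_of_nonempty_biInter hU_closed
    (fun n => isBounded_iff.2 ⟨_, fun u hu v hv => hdist' n u hu v hv⟩)
    (fun N => ?_) ?_
  · obtain ⟨w, hw⟩ := hU_ne N
    exact ⟨w, mem_iInter₂.2 fun n hn => hU hn hw⟩
  · refine squeeze_zero (fun n => diam_nonneg) (fun n => ?_) (by simpa using hb.sqrt)
    exact diam_le_of_forall_dist_le (Real.sqrt_nonneg _) (hdist' n)

theorem LowerSemicontinuous.exists_forall_le_of_sublevel_dist_sq_le [CompleteSpace X]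
    {F g : X → ℝ} {l K : ℝ}
    (hF : LowerSemicontinuous F) (hl : IsGLB (range F) l) (hg : LowerSemicontinuous g)
    (hg_below : BddBelow (range g)) (hg_above : ∀ t, BddAbove (g '' {w | F w ≤ t}))
    (hest : ∀ ε Q, Q ∈ lowerBounds (g '' {w | F w ≤ l + ε}) → ∀ u v,
      F u ≤ l + ε → F v ≤ l + ε → dist u v ^ 2 ≤ 2 * (g u - Q) + 2 * (g v - Q) + K * ε) :
    ∃ y, ∀ w, F y ≤ F w := by
  set ε : ℕ → ℝ := fun n => 1 / ((n : ℝ) + 1)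
  have hε_lim : Tendsto ε atTop (𝓝 0) := tendsto_one_div_add_atTop_nhds_zero_nat
  have hε_anti : Antitone ε := fun m n h => by
    simp only [ε]
    gcongr
  obtain ⟨Q, R, hQR, hQ, hne⟩ :=
    exists_tendsto_of_sublevel_lowerBounds hl hg_below hg_above (fun n => by positivity) hε_anti
  set U : ℕ → Set X := fun n => {w | F w ≤ l + ε n ∧ g w ≤ R + ε n}
  have hU_anti : Antitone U := fun m n h w ⟨hFw, hgw⟩ =>
    ⟨hFw.trans (by linarith [hε_anti h]), hgw.trans (by linarith [hε_anti h])⟩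
  have hU_dist : ∀ n, ∀ u ∈ U n, ∀ v ∈ U n, dist u v ^ 2 ≤ 4 * (R - Q n) + (4 + K) * ε n := by
    rintro n u ⟨hFu, hgu⟩ v ⟨hFv, hgv⟩
    linarith [hest (ε n) (Q n) (hQ n) u v hFu hFv]
  have hb : Tendsto (fun n => 4 * (R - Q n) + (4 + K) * ε n) atTop (𝓝 0) := by
    simpa using (((tendsto_const_nhds (x := R)).sub hQR).const_mul 4).add (hε_lim.const_mul (4 + K))
  obtain ⟨y, hy⟩ := exists_mem_iInter_of_dist_sq_le hU_anti
    (fun n => (hF.isClosed_preimage _).inter (hg.isClosed_preimage _)) hne hU_dist hb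
  have hFy : F y ≤ l :=
    ge_of_tendsto' (by simpa using tendsto_const_nhds.add hε_lim) fun n => (mem_iInter.1 hy n).1
  exact ⟨y, fun w => hFy.trans (hl.1 ⟨w, rfl⟩)⟩

variable {f : X → ℝ} {x : X} {τ : ℝ}

noncomputable def proxObjective (f : X → ℝ) (x : X) (τ : ℝ) (z : X) : ℝ :=
  f z + dist x z ^ 2 / (2 * τ)

lemma dist_sq_le_of_proxObjective_le (hτ : 0 < τ) {c t : ℝ} {w : X} (hc : c ≤ f w)
    (hw : proxObjective f x τ w ≤ t) : dist x w ^ 2 ≤ 2 * τ * (t - c) := by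
  have h : dist x w ^ 2 / (2 * τ) ≤ t - c := by
    unfold proxObjective at hw
    linarith
  rwa [div_le_iff₀ (by positivity), mul_comm] at h

lemma dist_sq_le_of_proxObjective_le_add (hτ : 0 < τ) {l ε : ℝ} {m w : X}
    (hm : l ≤ proxObjective f x τ m) (hfm : f m ≤ f w) (hw : proxObjective f x τ w ≤ l + ε) :
    dist x w ^ 2 ≤ dist x m ^ 2 + 2 * τ * ε := by
  have h : dist x w ^ 2 / (2 * τ) ≤ (dist x m ^ 2 + 2 * τ * ε) / (2 * τ) := by
    unfold proxObjective at hm hw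
    rw [add_div, mul_div_cancel_left₀ _ (by positivity)]
    linarith
  exact (div_le_div_iff_of_pos_right (by positivity)).1 h

lemma dist_sq_le_of_midpoint (hτ : 0 < τ) {l ε Q : ℝ} {u v m : X}
    (hl : l ∈ lowerBounds (range (proxObjective f x τ)))
    (hQ : Q ∈ lowerBounds ((fun w => dist x w ^ 2) '' {w | proxObjective f x τ w ≤ l + ε}))
    (hu : proxObjective f x τ u ≤ l + ε) (hv : proxObjective f x τ v ≤ l + ε)
    (hm : dist x m ^ 2 ≤ (dist x u ^ 2 + dist x v ^ 2) / 2 - dist u v ^ 2 / 4)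
    (hfm : f m ≤ max (f u) (f v)) :
    dist u v ^ 2 ≤ 2 * (dist x u ^ 2 - Q) + 2 * (dist x v ^ 2 - Q) + 8 * τ * ε := by
  obtain ⟨w, hw, hfw⟩ : ∃ w, proxObjective f x τ w ≤ l + ε ∧ f m ≤ f w := by
    rcases le_total (f u) (f v) with h | h
    · exact ⟨v, hv, hfm.trans (max_eq_right h).le⟩
    · exact ⟨u, hu, hfm.trans (max_eq_left h).le⟩
  have hQw : Q ≤ dist x w ^ 2 := hQ ⟨w, hw, rfl⟩
  have hwm := dist_sq_le_of_proxObjective_le_add hτ (hl ⟨m, rfl⟩) hfw hw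
  linarith

end

theorem resolvent_nonempty_of_quasiconvex_general
    {X : Type*} [MetricSpace X] [CompleteSpace X]
    (γ : X → X → ℝ → X)
    (hcat : ∀ x y z, ∀ s ∈ Set.Icc (0:ℝ) 1,
      dist x (γ y z s) ^ 2 ≤
        (1 - s) * dist x y ^ 2 + s * dist x z ^ 2 - (1 - s) * s * dist y z ^ 2)
    (f : X → ℝ) (hlsc : LowerSemicontinuous f) (hbdd : BddBelow (Set.range f))
    (hqc : ∀ x y, ∀ s ∈ Set.Ioo (0:ℝ) 1, f (γ x y s) ≤ max (f x) (f y))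
    (x : X) (τ : ℝ) (hτ : 0 < τ) :
    ∃ z : X, ∀ w : X, f z + dist x z ^ 2 / (2 * τ) ≤ f w + dist x w ^ 2 / (2 * τ) := by
  obtain ⟨c, hc⟩ := hbdd
  have hcf : ∀ w, c ≤ f w := fun w => hc ⟨w, rfl⟩
  have hdist : Continuous fun w => dist x w ^ 2 := (continuous_const.dist continuous_id).pow 2
  have : Nonempty X := ⟨x⟩
  have hl := isGLB_ciInf (f := proxObjective f x τ) ⟨c, by
    rintro _ ⟨w, rfl⟩
    exact (hcf w).trans (le_add_of_nonneg_right (by positivity))⟩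
  refine (hlsc.add (hdist.div_const _).lowerSemicontinuous :
      LowerSemicontinuous (proxObjective f x τ)).exists_forall_le_of_sublevel_dist_sq_le
    (K := 8 * τ) hl hdist.lowerSemicontinuous ⟨0, ?_⟩ (fun t => ⟨2 * τ * (t - c), ?_⟩) ?_
  · rintro _ ⟨w, rfl⟩
    positivity
  · rintro _ ⟨w, hw, rfl⟩
    exact dist_sq_le_of_proxObjective_le hτ (hcf w) hw
  · intro ε Q hQ u v hu hv
    have hs : (1 / 2 : ℝ) ∈ Set.Ioo 0 1 := by norm_num
    exact dist_sq_le_of_midpoint hτ hl.1 hQ hu hv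
      (by linarith [hcat x u v (1 / 2) (Set.Ioo_subset_Icc_self hs)]) (hqc u v (1 / 2) hs)

/-- In a complete CAT(0) space, the Moreau–Yosida resolvent set `J^f_τ(x)` of a lower
semi-continuous quasi-convex function bounded below is nonempty. -/
theorem resolvent_nonempty_of_quasiconvex
    {X : Type*} [MetricSpace X] [CompleteSpace X]
    (γ : X → X → ℝ → X)
    (hγ0 : ∀ x y, γ x y 0 = x) (hγ1 : ∀ x y, γ x y 1 = y)
    (hgeo : ∀ x y, ∀ s ∈ Set.Icc (0:ℝ) 1, ∀ t ∈ Set.Icc (0:ℝ) 1,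
      dist (γ x y s) (γ x y t) = |s - t| * dist x y)
    (hcat : ∀ x y z, ∀ s ∈ Set.Icc (0:ℝ) 1,
      dist x (γ y z s) ^ 2 ≤
        (1 - s) * dist x y ^ 2 + s * dist x z ^ 2 - (1 - s) * s * dist y z ^ 2)
    (f : X → ℝ) (hlsc : LowerSemicontinuous f) (hbdd : BddBelow (Set.range f))
    (hqc : ∀ x y, ∀ s ∈ Set.Ioo (0:ℝ) 1, f (γ x y s) ≤ max (f x) (f y))
    (x : X) (τ : ℝ) (hτ : 0 < τ) :
    ∃ z : X, ∀ w : X, f z + dist x z ^ 2 / (2 * τ) ≤ f w + dist x w ^ 2 / (2 * τ) :=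
  resolvent_nonempty_of_quasiconvex_general γ hcat f hlsc hbdd hqc x τ hτ
end

section
/- Let (X,d) be a complete CAT(0) space and f : X → ℝ a lower semi-continuous λ-convex function with λ < 0. Then for every x ∈ X and 0 < τ < (−λ)⁻¹, the set of minimizers of z ↦ f(z) + d²(x,z)/(2τ) consists of exactly one point. -/
/-!
With `c = (2τ)⁻¹`, the CAT(0) inequality makes `c·d²(x, ·)` a `2c`-convex function along
geodesics, so the Moreau–Yosida functional `F = f + c·d²(x, ·)` is `κ`-convex with
`κ = λ + τ⁻¹ > 0`. Such a function is bounded below (lower semicontinuity bounds it near `x`,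
and convexity along geodesics issued from `x` propagates this bound with a quadratic gain), and
the midpoint inequality `F(m) ≤ (F y + F z)/2 - κ/8 · d²(y, z)` forces every minimizing
sequence to be Cauchy and any two minimizers to coincide; completeness and lower semicontinuity then
give a minimizer.
-/

open Set Filter Topology

section MidpointConvex

variable {X : Type*} [MetricSpace X]

def MidpointStronglyConvex (κ : ℝ) (F : X → ℝ) : Prop :=
  ∀ y z, ∃ m, F m ≤ (F y + F z) / 2 - κ / 8 * dist y z ^ 2

variable {F : X → ℝ} {κ : ℝ}

theorem MidpointStronglyConvex.dist_sq_le (hmid : MidpointStronglyConvex κ F)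
    {I : ℝ} (hI : ∀ w, I ≤ F w) (y z : X) :
    κ / 8 * dist y z ^ 2 ≤ (F y + F z) / 2 - I := by
  obtain ⟨m, hm⟩ := hmid y z
  linarith [hI m]

theorem MidpointStronglyConvex.eq_of_forall_le (hmid : MidpointStronglyConvex κ F) (hκ : 0 < κ)
    {y z : X} (hy : ∀ w, F y ≤ F w) (hz : ∀ w, F z ≤ F w) : y = z := by
  have hyz := hmid.dist_sq_le hy y z
  have hκd : κ / 8 * dist y z ^ 2 ≤ 0 := by linarith [hz y]
  have hd : dist y z ^ 2 ≤ 0 := nonpos_of_mul_nonpos_right hκd (by positivity)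
  exact dist_eq_zero.mp (pow_eq_zero_iff two_ne_zero |>.mp (hd.antisymm (sq_nonneg _)))

theorem MidpointStronglyConvex.exists_forall_le [CompleteSpace X] [Nonempty X]
    (hmid : MidpointStronglyConvex κ F) (hκ : 0 < κ) (hF : LowerSemicontinuous F)
    (hbdd : BddBelow (range F)) :
    ∃ z, ∀ w, F z ≤ F w := by
  set I := sInf (range F)
  have hI : ∀ w, I ≤ F w := fun w => csInf_le hbdd ⟨w, rfl⟩
  obtain ⟨u, hu_anti, hu_lim, hu_mem⟩ := exists_seq_tendsto_sInf (range_nonempty F) hbdd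
  choose y hy using hu_mem
  have hcauchy : CauchySeq y := by
    refine cauchySeq_of_le_tendsto_0' (fun n => √(8 / κ * (u n - I))) (fun n m hnm => ?_) ?_
    · refine Real.le_sqrt_of_sq_le ?_
      have hmid_nm := hmid.dist_sq_le hI (y n) (y m)
      rw [hy, hy] at hmid_nm
      calc dist (y n) (y m) ^ 2 = 8 / κ * (κ / 8 * dist (y n) (y m) ^ 2) := by field_simp
        _ ≤ 8 / κ * (u n - I) := by gcongr; linarith [hu_anti hnm]
    · simpa [I] using ((hu_lim.sub_const I).const_mul (8 / κ)).sqrt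
  obtain ⟨z, hz⟩ := cauchySeq_tendsto_of_complete hcauchy
  refine ⟨z, fun w => le_trans ?_ (hI w)⟩
  by_contra! hIz
  obtain ⟨b, hIb, hbz⟩ := exists_between hIz
  have hlow : ∀ᶠ n in atTop, b < F (y n) := hz.eventually (hF z b hbz)
  have hup : ∀ᶠ n in atTop, F (y n) < b := by
    simpa only [hy] using hu_lim.eventually (gt_mem_nhds hIb)
  obtain ⟨n, hn_low, hn_up⟩ := (hlow.and hup).exists
  exact hn_low.asymm hn_up

theorem MidpointStronglyConvex.existsUnique_forall_le [CompleteSpace X] [Nonempty X]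
    (hmid : MidpointStronglyConvex κ F) (hκ : 0 < κ) (hF : LowerSemicontinuous F)
    (hbdd : BddBelow (range F)) :
    ∃! z, ∀ w, F z ≤ F w :=
  let ⟨z, hz⟩ := hmid.exists_forall_le hκ hF hbdd
  ⟨z, hz, fun _ hw => hmid.eq_of_forall_le hκ hw hz⟩

end MidpointConvex

section Geodesic

variable {X : Type*} [MetricSpace X] {γ : X → X → ℝ → X}

theorem dist_geodesic_left (hγ0 : ∀ x y, γ x y 0 = x)
    (hgeo : ∀ x y, ∀ s ∈ Icc (0 : ℝ) 1, ∀ t ∈ Icc (0 : ℝ) 1,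
      dist (γ x y s) (γ x y t) = |s - t| * dist x y)
    (x y : X) {s : ℝ} (hs : s ∈ Icc (0 : ℝ) 1) : dist x (γ x y s) = s * dist x y := by
  have h := hgeo x y s hs 0 ⟨le_rfl, zero_le_one⟩
  rw [hγ0, sub_zero, abs_of_nonneg hs.1] at h
  rw [dist_comm, h]

theorem bddBelow_range_of_strongly_convex_from {F : X → ℝ} {κ : ℝ} {x : X}
    (hγ : ∀ y, ∀ s ∈ Icc (0 : ℝ) 1, dist x (γ x y s) = s * dist x y)
    (hF : LowerSemicontinuousAt F x) (hκ : 0 < κ)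
    (hconv : ∀ y, ∀ s ∈ Ioo (0 : ℝ) 1,
      F (γ x y s) ≤ (1 - s) * F x + s * F y - κ / 2 * (1 - s) * s * dist x y ^ 2) :
    BddBelow (range F) := by
  obtain ⟨δ, hδ, hball⟩ := Metric.eventually_nhds_iff.mp (hF (F x - 1) (by linarith))
  refine ⟨F x - 1 - 4 / (κ * δ ^ 2), forall_mem_range.mpr fun y => ?_⟩
  have hslack : 0 < 4 / (κ * δ ^ 2) := by positivity
  by_cases hy : dist y x < δ
  · linarith [hball hy]
  set D := dist x y
  have hD : δ ≤ D := by rw [dist_comm] at hy; exact not_lt.mp hy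
  have hD0 : 0 < D := hδ.trans_le hD
  -- The point of the geodesic from `x` to `y` at distance `δ / 2` from `x` lies in the ball,
  -- and convexity there gives `F y ≥ F x - 2 D / δ + κ D² / 4 ≥ F x - 4 / (κ δ²)`.
  set s := δ / (2 * D)
  have hsD : s * D = δ / 2 := by simp only [s]; field_simp
  have hs0 : 0 < s := by positivity
  have hs_half : s ≤ 1 / 2 := by rw [div_le_iff₀ (by positivity)]; linarith
  have hnear : F x - 1 < F (γ x y s) := by
    apply hball
    rw [dist_comm, hγ y s ⟨hs0.le, by linarith⟩, hsD]
    linarith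
  have hstep := hconv y s ⟨hs0, by linarith⟩
  have hamgm : 2 * D / δ ≤ κ / 4 * D ^ 2 + 4 / (κ * δ ^ 2) := by
    have : κ / 4 * D ^ 2 + 4 / (κ * δ ^ 2) - 2 * D / δ =
        (κ * D * δ - 4) ^ 2 / (4 * κ * δ ^ 2) := by
      field_simp; ring
    linarith [show 0 ≤ (κ * D * δ - 4) ^ 2 / (4 * κ * δ ^ 2) by positivity]
  have hone : 1 ≤ s * (κ / 4 * D ^ 2 + 4 / (κ * δ ^ 2)) := by
    calc (1 : ℝ) = s * (2 * D / δ) := by simp only [s]; field_simp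
      _ ≤ _ := by gcongr
  have hquad : κ / 4 * s * D ^ 2 ≤ κ / 2 * (1 - s) * s * D ^ 2 := by
    have : 0 ≤ κ * s * D ^ 2 * (1 / 2 - s) := by
      have := sub_nonneg.mpr hs_half; positivity
    linarith
  have : s * (F x - 4 / (κ * δ ^ 2)) ≤ s * F y := by linarith
  linarith [le_of_mul_le_mul_left this hs0]

noncomputable def moreauYosida (f : X → ℝ) (x : X) (τ : ℝ) (z : X) : ℝ :=
  f z + dist x z ^ 2 / (2 * τ)

theorem moreauYosida_convex {f : X → ℝ} {lam τ : ℝ} {x : X}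
    (hcat : ∀ y z, ∀ s ∈ Icc (0 : ℝ) 1,
      dist x (γ y z s) ^ 2 ≤
        (1 - s) * dist x y ^ 2 + s * dist x z ^ 2 - (1 - s) * s * dist y z ^ 2)
    (hconv : ∀ y z, ∀ s ∈ Ioo (0 : ℝ) 1,
      f (γ y z s) ≤ (1 - s) * f y + s * f z - lam / 2 * (1 - s) * s * dist y z ^ 2)
    (hτ : 0 < τ) (y z : X) {s : ℝ} (hs : s ∈ Ioo (0 : ℝ) 1) :
    moreauYosida f x τ (γ y z s) ≤ (1 - s) * moreauYosida f x τ y + s * moreauYosida f x τ z -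
      (lam + τ⁻¹) / 2 * (1 - s) * s * dist y z ^ 2 := by
  have hf := hconv y z s hs
  have hd := div_le_div_of_nonneg_right (hcat y z s (Ioo_subset_Icc_self hs))
    (by positivity : 0 ≤ 2 * τ)
  unfold moreauYosida
  linear_combination hf + hd

end Geodesic

theorem resolvent_unique_of_lambda_convex_general
    {X : Type*} [MetricSpace X] [CompleteSpace X]
    (γ : X → X → ℝ → X)
    (hγ0 : ∀ x y, γ x y 0 = x)
    (hgeo : ∀ x y, ∀ s ∈ Set.Icc (0:ℝ) 1, ∀ t ∈ Set.Icc (0:ℝ) 1,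
      dist (γ x y s) (γ x y t) = |s - t| * dist x y)
    (hcat : ∀ x y z, ∀ s ∈ Set.Icc (0:ℝ) 1,
      dist x (γ y z s) ^ 2 ≤
        (1 - s) * dist x y ^ 2 + s * dist x z ^ 2 - (1 - s) * s * dist y z ^ 2)
    (f : X → ℝ) (hlsc : LowerSemicontinuous f)
    (lam : ℝ) (hlam : lam < 0)
    (hconv : ∀ x y, ∀ s ∈ Set.Ioo (0:ℝ) 1,
      f (γ x y s) ≤ (1 - s) * f x + s * f y - lam / 2 * (1 - s) * s * dist x y ^ 2)
    (x : X) (τ : ℝ) (hτ : 0 < τ) (hτ' : τ < (-lam)⁻¹) :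
    ∃! z : X, ∀ w : X, f z + dist x z ^ 2 / (2 * τ) ≤ f w + dist x w ^ 2 / (2 * τ) := by
  have hκ : 0 < lam + τ⁻¹ := by
    linarith [(lt_inv_comm₀ hτ (neg_pos.mpr hlam)).mp hτ']
  have hconvM := moreauYosida_convex (hcat x) hconv hτ
  have hlscM : LowerSemicontinuous (moreauYosida f x τ) :=
    hlsc.add (by fun_prop : Continuous fun z => dist x z ^ 2 / (2 * τ)).lowerSemicontinuous
  have hmid : MidpointStronglyConvex (lam + τ⁻¹) (moreauYosida f x τ) :=
    fun y z => ⟨γ y z (1 / 2), by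
      linarith [hconvM y z (s := 1 / 2) ⟨by norm_num, by norm_num⟩]⟩
  have hbdd : BddBelow (range (moreauYosida f x τ)) :=
    bddBelow_range_of_strongly_convex_from (dist_geodesic_left hγ0 hgeo x) (hlscM x) hκ
      fun y _ hs => hconvM x y hs
  have : Nonempty X := ⟨x⟩
  exact hmid.existsUnique_forall_le hκ hlscM hbdd

/-- In a complete CAT(0) space, for a lower semi-continuous `λ`-convex function with
`λ < 0` and `0 < τ < (−λ)⁻¹`, the Moreau–Yosida resolvent `J^f_τ(x)` is a singleton. -/
theorem resolvent_unique_of_lambda_convex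
    {X : Type*} [MetricSpace X] [CompleteSpace X]
    (γ : X → X → ℝ → X)
    (hγ0 : ∀ x y, γ x y 0 = x) (hγ1 : ∀ x y, γ x y 1 = y)
    (hgeo : ∀ x y, ∀ s ∈ Set.Icc (0:ℝ) 1, ∀ t ∈ Set.Icc (0:ℝ) 1,
      dist (γ x y s) (γ x y t) = |s - t| * dist x y)
    (hcat : ∀ x y z, ∀ s ∈ Set.Icc (0:ℝ) 1,
      dist x (γ y z s) ^ 2 ≤
        (1 - s) * dist x y ^ 2 + s * dist x z ^ 2 - (1 - s) * s * dist y z ^ 2)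
    (f : X → ℝ) (hlsc : LowerSemicontinuous f)
    (lam : ℝ) (hlam : lam < 0)
    (hconv : ∀ x y, ∀ s ∈ Set.Ioo (0:ℝ) 1,
      f (γ x y s) ≤ (1 - s) * f x + s * f y - lam / 2 * (1 - s) * s * dist x y ^ 2)
    (x : X) (τ : ℝ) (hτ : 0 < τ) (hτ' : τ < (-lam)⁻¹) :
    ∃! z : X, ∀ w : X, f z + dist x z ^ 2 / (2 * τ) ≤ f w + dist x w ^ 2 / (2 * τ) :=
  resolvent_unique_of_lambda_convex_general γ hγ0 hgeo hcat f hlsc lam hlam hconv x τ hτ hτ'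
end

section
/- Let (X,d) be a complete CAT(0) space, f : X → ℝ lower semi-continuous and quasi-convex, and (x_k)_{k≥0} a discrete-time gradient curve, i.e., x_k minimizes z ↦ f(z) + d²(x_{k−1},z)/(2τ_k) for each k ≥ 1 (with τ_k > 0). Then the sequence is self-contracted: d(x_l, x_m) ≤ d(x_k, x_m) for all 0 ≤ k < l < m. -/
/-!
Each step of the sequence only decreases `f`, so by quasi-convexity `f` stays below `f (x (k + 1))`
on the geodesic from `x (k + 1)` to any later `x m`. Minimality of `x (k + 1)` then says that
`x k` is no closer to that geodesic than to `x (k + 1)`; together with the CAT(0) inequality at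
small parameters this gives `d(x_{k+1}, x_m) ≤ d(x_k, x_m)`, and the claim follows by chaining
these one-step contractions.
-/

open Filter Topology Set

def IsProximalPoint {X : Type*} [MetricSpace X] (f : X → ℝ) (t : ℝ) (a b : X) : Prop :=
  ∀ z, f b + dist a b ^ 2 / (2 * t) ≤ f z + dist a z ^ 2 / (2 * t)

theorem le_of_forall_one_sub_mul_le {a b : ℝ} (h : ∀ s ∈ Ioo (0 : ℝ) 1, (1 - s) * a ≤ b) :
    a ≤ b := by
  have hcont : Continuous fun s : ℝ => (1 - s) * a := by fun_prop
  have hlim : Tendsto (fun s : ℝ => (1 - s) * a) (𝓝[>] 0) (𝓝 a) :=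
    (hcont.tendsto' 0 a (by simp)).mono_left nhdsWithin_le_nhds
  refine le_of_tendsto hlim ?_
  filter_upwards [Ioo_mem_nhdsGT (zero_lt_one' ℝ)] with s hs using h s hs

theorem dist_le_of_forall_dist_le_of_cat {X : Type*} [MetricSpace X] {x y z : X} (p : ℝ → X)
    (hcat : ∀ s ∈ Ioo (0 : ℝ) 1, dist x (p s) ^ 2 ≤
      (1 - s) * dist x y ^ 2 + s * dist x z ^ 2 - (1 - s) * s * dist y z ^ 2)
    (hfar : ∀ s ∈ Ioo (0 : ℝ) 1, dist x y ≤ dist x (p s)) :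
    dist y z ≤ dist x z := by
  have hsq : dist y z ^ 2 ≤ dist x z ^ 2 := by
    refine le_of_forall_one_sub_mul_le fun s hs => ?_
    have hcmp := (pow_le_pow_left₀ dist_nonneg (hfar s hs) 2).trans (hcat s hs)
    -- the CAT(0) inequality minus `d(x,y)²` is `s` times the claim
    have hscaled : s * ((1 - s) * dist y z ^ 2) ≤ s * (dist x z ^ 2 - dist x y ^ 2) := by
      linarith
    nlinarith [le_of_mul_le_mul_left hscaled hs.1, sq_nonneg (dist x y)]
  exact (pow_le_pow_iff_left₀ dist_nonneg dist_nonneg two_ne_zero).mp hsq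

namespace IsProximalPoint

variable {X : Type*} [MetricSpace X] {f : X → ℝ} {t : ℝ} {a b : X}

theorem le_left (hp : IsProximalPoint f t a b) (ht : 0 ≤ t) : f b ≤ f a := by
  have h := hp a
  rw [dist_self, zero_pow two_ne_zero, zero_div, add_zero] at h
  have : 0 ≤ dist a b ^ 2 / (2 * t) := by positivity
  linarith

theorem dist_le_of_le (hp : IsProximalPoint f t a b) (ht : 0 < t) {z : X} (hz : f z ≤ f b) :
    dist a b ≤ dist a z := by
  have hdiv : dist a b ^ 2 / (2 * t) ≤ dist a z ^ 2 / (2 * t) := by linarith [hp z]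
  rw [div_le_div_iff_of_pos_right (by positivity)] at hdiv
  exact (pow_le_pow_iff_left₀ dist_nonneg dist_nonneg two_ne_zero).mp hdiv

theorem dist_le_dist_of_le (γ : X → X → ℝ → X)
    (hcat : ∀ x y z, ∀ s ∈ Icc (0 : ℝ) 1, dist x (γ y z s) ^ 2 ≤
      (1 - s) * dist x y ^ 2 + s * dist x z ^ 2 - (1 - s) * s * dist y z ^ 2)
    (hqc : ∀ x y, ∀ s ∈ Ioo (0 : ℝ) 1, f (γ x y s) ≤ max (f x) (f y))
    (hp : IsProximalPoint f t a b) (ht : 0 < t) {c : X} (hc : f c ≤ f b) :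
    dist b c ≤ dist a c :=
  dist_le_of_forall_dist_le_of_cat (γ b c)
    (fun s hs => hcat a b c s (Ioo_subset_Icc_self hs))
    (fun s hs => hp.dist_le_of_le ht ((hqc b c s hs).trans (max_eq_left hc).le))

end IsProximalPoint

theorem discrete_gradient_curve_selfContracted_general
    {X : Type*} [MetricSpace X]
    (γ : X → X → ℝ → X)
    (hcat : ∀ x y z, ∀ s ∈ Set.Icc (0:ℝ) 1,
      dist x (γ y z s) ^ 2 ≤
        (1 - s) * dist x y ^ 2 + s * dist x z ^ 2 - (1 - s) * s * dist y z ^ 2)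
    (f : X → ℝ)
    (hqc : ∀ x y, ∀ s ∈ Set.Ioo (0:ℝ) 1, f (γ x y s) ≤ max (f x) (f y))
    (x : ℕ → X) (τ : ℕ → ℝ) (hτ : ∀ k, 0 < τ k)
    (hmin : ∀ k : ℕ, ∀ z : X,
      f (x (k + 1)) + dist (x k) (x (k + 1)) ^ 2 / (2 * τ (k + 1)) ≤
        f z + dist (x k) z ^ 2 / (2 * τ (k + 1))) :
    ∀ k l m : ℕ, k < l → l < m → dist (x l) (x m) ≤ dist (x k) (x m) := by
  have hprox : ∀ k, IsProximalPoint f (τ (k + 1)) (x k) (x (k + 1)) := hmin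
  have hf : Antitone (f ∘ x) :=
    antitone_nat_of_succ_le fun k => (hprox k).le_left (hτ (k + 1)).le
  have hstep : ∀ m j, j + 1 ≤ m → dist (x (j + 1)) (x m) ≤ dist (x j) (x m) := fun m j hj =>
    (hprox j).dist_le_dist_of_le γ hcat hqc (hτ (j + 1)) (hf hj)
  intro k l m hkl hlm
  replace hkl := hkl.le
  induction l, hkl using Nat.le_induction with
  | base => exact le_rfl
  | succ j _ ih => exact (hstep m j hlm.le).trans (ih (by omega))

/-- Discrete-time gradient curves (proximal sequences) of a lower semi-continuous
quasi-convex function on a complete CAT(0) space are self-contracted: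
`d(x_l, x_m) ≤ d(x_k, x_m)` for `k < l < m`. -/
theorem discrete_gradient_curve_selfContracted
    {X : Type*} [MetricSpace X] [CompleteSpace X]
    (γ : X → X → ℝ → X)
    (hγ0 : ∀ x y, γ x y 0 = x) (hγ1 : ∀ x y, γ x y 1 = y)
    (hgeo : ∀ x y, ∀ s ∈ Set.Icc (0:ℝ) 1, ∀ t ∈ Set.Icc (0:ℝ) 1,
      dist (γ x y s) (γ x y t) = |s - t| * dist x y)
    (hcat : ∀ x y z, ∀ s ∈ Set.Icc (0:ℝ) 1,
      dist x (γ y z s) ^ 2 ≤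
        (1 - s) * dist x y ^ 2 + s * dist x z ^ 2 - (1 - s) * s * dist y z ^ 2)
    (f : X → ℝ) (hlsc : LowerSemicontinuous f)
    (hqc : ∀ x y, ∀ s ∈ Set.Ioo (0:ℝ) 1, f (γ x y s) ≤ max (f x) (f y))
    (x : ℕ → X) (τ : ℕ → ℝ) (hτ : ∀ k, 0 < τ k)
    (hmin : ∀ k : ℕ, ∀ z : X,
      f (x (k + 1)) + dist (x k) (x (k + 1)) ^ 2 / (2 * τ (k + 1)) ≤
        f z + dist (x k) z ^ 2 / (2 * τ (k + 1))) :
    ∀ k l m : ℕ, k < l → l < m → dist (x l) (x m) ≤ dist (x k) (x m) :=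
  discrete_gradient_curve_selfContracted_general γ hcat f hqc x τ hτ hmin
end

section
/- Let ξ : [0,ℓ) → T be a self-contracted curve in a metric tree (an ℝ-tree). If ξ is continuous, then its image is contained in a geodesic segment (is isometric to an interval). -/
/-!
Put `f t = dist (ξ 0) (ξ t)`. For `s ≤ t`, the curve on `[0, s]` is a path from `ξ 0` to `ξ s`,
so in a 0-hyperbolic space it passes through the branch point `p` of `ξ t` over the segment
`[ξ 0, ξ s]`. The four-point condition gives `dist p (ξ t) ≤ dist (ξ s) (ξ t) - dist p (ξ s)`,
while self-contraction gives `dist (ξ s) (ξ t) ≤ dist p (ξ t)`; hence `p = ξ s`, i.e. `ξ s` lies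
between `ξ 0` and `ξ t`. So `dist (ξ s) (ξ t) = |f s - f t|`, and the image of `ξ` is isometric
to the interval `f '' [0, ℓ)`.
-/

open Set Filter Topology

def IsZeroHyperbolic (X : Type*) [PseudoMetricSpace X] : Prop :=
  ∀ x y z w : X, dist x y + dist z w ≤ max (dist x z + dist y w) (dist x w + dist y z)

section ZeroHyperbolic

variable {X : Type*} [PseudoMetricSpace X]

/-- If `y` projects strictly farther than `x` onto the segment from `a` to `e`, then the
distance from `x` to that segment is at most `dist x y`. -/
lemma IsZeroHyperbolic.dist_add_dist_sub_le_two_mul_dist (hX : IsZeroHyperbolic X)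
    {a e x y : X} (h : dist a x - dist x e < dist a y - dist y e) :
    dist a x + dist x e - dist a e ≤ 2 * dist x y := by
  have := dist_triangle a y x
  rcases le_max_iff.mp (hX a y e x) with h₁ | h₁ <;>
    simp only [dist_comm e x, dist_comm y x, dist_comm y e] at * <;> linarith

/-- The point of the path lying on the segment at level `ρ` is found at the last time the
level is at most `ρ`. -/
lemma IsZeroHyperbolic.exists_between_dist_sub_eq (hX : IsZeroHyperbolic X) {c : ℝ → X}
    {α β ρ : ℝ} (hαβ : α ≤ β) (hc : ContinuousOn c (Icc α β))
    (hρ : ρ ∈ Icc (-dist (c α) (c β)) (dist (c α) (c β))) :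
    ∃ u ∈ Icc α β, dist (c α) (c u) + dist (c u) (c β) = dist (c α) (c β) ∧
      dist (c α) (c u) - dist (c u) (c β) = ρ := by
  set ψ : X → ℝ := fun p => dist (c α) p - dist p (c β)
  have hψ : Continuous ψ := by fun_prop
  have hS : IsCompact (Icc α β ∩ (ψ ∘ c) ⁻¹' Iic ρ) :=
    isCompact_Icc.of_isClosed_subset
      ((hψ.comp_continuousOn hc).preimage_isClosed_of_isClosed isClosed_Icc isClosed_Iic)
      inter_subset_left
  obtain ⟨u₁, ⟨hu₁, hψu₁⟩, hlast⟩ := hS.exists_isGreatest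
    ⟨α, left_mem_Icc.2 hαβ, by simpa [ψ] using hρ.1⟩
  refine ⟨u₁, hu₁, ?_⟩
  rcases hu₁.2.eq_or_lt with rfl | hlt
  · simp only [ψ, Function.comp_apply, dist_self, add_zero, sub_zero, mem_preimage,
      mem_Iic] at hψu₁ ⊢
    exact ⟨trivial, le_antisymm hψu₁ hρ.2⟩
  have hafter : ∀ᶠ u in 𝓝[>] u₁, ρ < ψ (c u) ∧ u ∈ Icc α β := by
    filter_upwards [Ioc_mem_nhdsGT hlt] with u hu
    have hu' : u ∈ Icc α β := ⟨hu₁.1.trans hu.1.le, hu.2⟩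
    exact ⟨lt_of_not_ge fun h => (hlast ⟨hu', h⟩).not_gt hu.1, hu'⟩
  have hcu₁ : ContinuousWithinAt c (Ioi u₁) u₁ :=
    (hc u₁ hu₁).mono_of_mem_nhdsWithin (mem_of_superset (Ioc_mem_nhdsGT hlt)
      fun u hu => ⟨hu₁.1.trans hu.1.le, hu.2⟩)
  have hlevel : ρ ≤ ψ (c u₁) :=
    ge_of_tendsto (hψ.continuousAt.comp_continuousWithinAt hcu₁) (hafter.mono fun _ h => h.1.le)
  have hexcess : dist (c α) (c u₁) + dist (c u₁) (c β) - dist (c α) (c β) ≤ 2 * 0 := by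
    refine ge_of_tendsto ?_ (hafter.mono fun u h =>
      hX.dist_add_dist_sub_le_two_mul_dist (hψu₁.trans_lt h.1))
    simpa using ((tendsto_const_nhds (x := c u₁)).dist hcu₁).const_mul 2
  exact ⟨le_antisymm (by linarith) (dist_triangle _ _ _), le_antisymm hψu₁ hlevel⟩

lemma IsZeroHyperbolic.dist_add_dist_eq_of_selfContracted (hX : IsZeroHyperbolic X)
    {c : ℝ → X} {α s : ℝ} {z : X} (hαs : α ≤ s) (hc : ContinuousOn c (Icc α s))
    (hsc : ∀ u ∈ Icc α s, dist (c s) z ≤ dist (c u) z) :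
    dist (c α) (c s) + dist (c s) z = dist (c α) z := by
  obtain ⟨u, hu, hbtw, hlevel⟩ := hX.exists_between_dist_sub_eq
    (ρ := dist (c α) z - dist (c s) z) hαs hc
    ⟨by linarith [dist_triangle_left (c s) z (c α)], by linarith [dist_triangle (c α) (c s) z]⟩
  have := hsc u hu
  have := dist_nonneg (x := c u) (y := c s)
  rcases le_max_iff.mp (hX (c u) z (c α) (c s)) with h | h <;>
    simp only [dist_comm (c u) (c α), dist_comm z (c α), dist_comm z (c s)] at * <;> linarith

end ZeroHyperbolic

lemma exists_isometry_range_eq_image {ι X Y : Type*} [PseudoMetricSpace Y] [MetricSpace X]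
    {f : ι → Y} {g : ι → X} {A : Set ι}
    (h : ∀ a ∈ A, ∀ b ∈ A, dist (g a) (g b) = dist (f a) (f b)) :
    ∃ φ : f '' A → X, Isometry φ ∧ range φ = g '' A := by
  choose σ hσA hσ using fun r : f '' A => r.2
  refine ⟨g ∘ σ, Isometry.of_dist_eq fun r r' => ?_, ?_⟩
  · rw [Function.comp_apply, Function.comp_apply, h _ (hσA r) _ (hσA r'), hσ, hσ,
      Subtype.dist_eq]
  · refine Subset.antisymm (range_subset_iff.2 fun r => mem_image_of_mem g (hσA r)) ?_
    rintro _ ⟨a, ha, rfl⟩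
    refine ⟨⟨f a, mem_image_of_mem f ha⟩, dist_le_zero.1 ?_⟩
    rw [Function.comp_apply, h _ (hσA _) _ ha, hσ, dist_self]

theorem selfContracted_tree_image_interval_general
    {X : Type*} [MetricSpace X]
    (htree : ∀ x y z w : X,
      dist x y + dist z w ≤ max (dist x z + dist y w) (dist x w + dist y z))
    {ℓ : ℝ} (ξ : ℝ → X)
    (hsc : ∀ t₁ t₂ t₃ : ℝ, 0 ≤ t₁ → t₁ ≤ t₂ → t₂ ≤ t₃ → t₃ < ℓ →
      dist (ξ t₂) (ξ t₃) ≤ dist (ξ t₁) (ξ t₃))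
    (hcont : ContinuousOn ξ (Set.Ico 0 ℓ)) :
    ∃ I : Set ℝ, I.OrdConnected ∧
      ∃ φ : I → X, Isometry φ ∧ Set.range φ = ξ '' Set.Ico 0 ℓ := by
  have hbtw : ∀ s t, 0 ≤ s → s ≤ t → t < ℓ →
      dist (ξ 0) (ξ s) + dist (ξ s) (ξ t) = dist (ξ 0) (ξ t) := fun s t hs hst ht =>
    IsZeroHyperbolic.dist_add_dist_eq_of_selfContracted htree hs
      (hcont.mono fun u hu => ⟨hu.1, hu.2.trans_lt (hst.trans_lt ht)⟩)
      fun u hu => hsc u s t hu.1 hu.2 hst ht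
  set f : ℝ → ℝ := fun u => dist (ξ 0) (ξ u)
  have hdist : ∀ s ∈ Ico 0 ℓ, ∀ t ∈ Ico 0 ℓ, dist (ξ s) (ξ t) = dist (f s) (f t) := by
    intro s hs t ht
    rcases le_total s t with hst | hts
    · rw [Real.dist_eq, abs_sub_comm, abs_of_nonneg] <;>
        linarith [hbtw s t hs.1 hst ht.2, dist_nonneg (x := ξ s) (y := ξ t)]
    · rw [Real.dist_eq, abs_of_nonneg, dist_comm] <;>
        linarith [hbtw t s ht.1 hts hs.2, dist_nonneg (x := ξ t) (y := ξ s)]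
  exact ⟨f '' Ico 0 ℓ, (isPreconnected_Ico.image f
    ((continuous_const.dist continuous_id).comp_continuousOn hcont)).ordConnected,
    exists_isometry_range_eq_image hdist⟩

/-- In an ℝ-tree (a geodesic, 0-hyperbolic metric space), the image of a continuous
self-contracted curve is isometric to an interval of the real line. -/
theorem selfContracted_tree_image_interval
    {X : Type*} [MetricSpace X]
    (γ : X → X → ℝ → X)
    (hγ0 : ∀ x y, γ x y 0 = x) (hγ1 : ∀ x y, γ x y 1 = y)
    (hgeo : ∀ x y, ∀ s ∈ Set.Icc (0:ℝ) 1, ∀ t ∈ Set.Icc (0:ℝ) 1,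
      dist (γ x y s) (γ x y t) = |s - t| * dist x y)
    (htree : ∀ x y z w : X,
      dist x y + dist z w ≤ max (dist x z + dist y w) (dist x w + dist y z))
    {ℓ : ℝ} (ξ : ℝ → X)
    (hsc : ∀ t₁ t₂ t₃ : ℝ, 0 ≤ t₁ → t₁ ≤ t₂ → t₂ ≤ t₃ → t₃ < ℓ →
      dist (ξ t₂) (ξ t₃) ≤ dist (ξ t₁) (ξ t₃))
    (hcont : ContinuousOn ξ (Set.Ico 0 ℓ)) :
    ∃ I : Set ℝ, I.OrdConnected ∧
      ∃ φ : I → X, Isometry φ ∧ Set.range φ = ξ '' Set.Ico 0 ℓ :=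
  selfContracted_tree_image_interval_general htree ξ hsc hcont
end

section
/- Let X be the k-spider (k copies of [0,1] glued at 0 with the length metric) and define ξ : [0,k) → X by letting ξ(t) be the endpoint 1 of the i-th leg for t ∈ [i−1, i). Then ξ is self-contracted and L(ξ) = 2(k−1). -/
/-!
Every value of `ξ` is the endpoint of a leg, so two values are at distance `0` or `2`
according as they lie on the same leg or not, and on `[0, k)` the leg index `⌊t⌋₊` is
nondecreasing in `t`. Self-contraction follows: if `ξ t₁` and `ξ t₃` share a leg, so does
`ξ t₂`. Along a partition each step costs at most twice the increase of the leg index,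
which telescopes to at most `2 (k - 1)`; the partition `0, 1, …, k - 1` attains it.
-/

open Finset

/-- Distance on the `k`-spider (`k` copies of `[0,1]` glued at `0` with the length
metric): points on the same leg are at the usual distance, points on different legs at
the sum of their distances to the center. -/
noncomputable def spiderDist {k : ℕ} (p q : Fin k × ℝ) : ℝ :=
  if p.1 = q.1 then |p.2 - q.2| else p.2 + q.2

theorem Fin.sum_univ_succ_sub_castSucc {M : Type*} [AddCommGroup M] {m : ℕ}
    (f : Fin (m + 1) → M) :
    ∑ i : Fin m, (f i.succ - f i.castSucc) = f (Fin.last m) - f 0 := by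
  induction m with
  | zero => simp
  | succ m ih =>
    rw [Fin.sum_univ_castSucc]
    simp only [Fin.succ_castSucc]
    rw [ih (fun i => f i.castSucc), Fin.castSucc_zero, Fin.succ_last]
    abel

section Endpoints

variable {k : ℕ}

theorem spiderDist_endpoints (i j : Fin k) :
    spiderDist (i, (1 : ℝ)) (j, 1) = if i = j then 0 else 2 := by
  unfold spiderDist
  split_ifs <;> norm_num

theorem spiderDist_endpoints_le_of_le {i j : Fin k} (hij : i ≤ j) :
    spiderDist (i, (1 : ℝ)) (j, 1) ≤ 2 * ((j : ℝ) - i) := by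
  rw [spiderDist_endpoints]
  split_ifs with h
  · simp [h]
  · have : (i : ℝ) + 1 ≤ j := by exact_mod_cast (lt_of_le_of_ne hij h : i < j)
    linarith

theorem spiderDist_endpoints_le_of_le_of_le {i j l : Fin k} (hij : i ≤ j) (hjl : j ≤ l) :
    spiderDist (j, (1 : ℝ)) (l, 1) ≤ spiderDist (i, (1 : ℝ)) (l, 1) := by
  rcases eq_or_ne j l with rfl | hjl'
  · rw [spiderDist_endpoints, if_pos rfl, spiderDist_endpoints]
    split_ifs <;> norm_num
  · have hil : i ≠ l := fun h => hjl' (le_antisymm hjl (h ▸ hij))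
    rw [spiderDist_endpoints, if_neg hjl', spiderDist_endpoints, if_neg hil]

theorem sum_spiderDist_endpoints_le {m : ℕ} {g : Fin (m + 1) → Fin k} (hg : Monotone g) :
    ∑ i : Fin m, spiderDist (g i.castSucc, (1 : ℝ)) (g i.succ, 1) ≤ 2 * ((k : ℝ) - 1) := by
  have hlast : ((g (Fin.last m) : ℕ) : ℝ) + 1 ≤ k := by exact_mod_cast (g (Fin.last m)).is_lt
  have hfirst : (0 : ℝ) ≤ (g 0 : ℕ) := Nat.cast_nonneg _
  calc ∑ i : Fin m, spiderDist (g i.castSucc, (1 : ℝ)) (g i.succ, 1)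
      ≤ ∑ i : Fin m, 2 * ((g i.succ : ℝ) - g i.castSucc) :=
        sum_le_sum fun i _ => spiderDist_endpoints_le_of_le (hg i.castSucc_le_succ)
    _ = 2 * ((g (Fin.last m) : ℝ) - g 0) := by
        rw [← mul_sum, Fin.sum_univ_succ_sub_castSucc (fun i => (g i : ℝ))]
    _ ≤ 2 * ((k : ℝ) - 1) := by linarith

theorem sum_spiderDist_endpoints_of_strictMono {m : ℕ} {g : Fin (m + 1) → Fin k}
    (hg : StrictMono g) :
    ∑ i : Fin m, spiderDist (g i.castSucc, (1 : ℝ)) (g i.succ, 1) = 2 * m := by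
  have hstep (i : Fin m) : spiderDist (g i.castSucc, (1 : ℝ)) (g i.succ, 1) = 2 := by
    rw [spiderDist_endpoints, if_neg (hg i.castSucc_lt_succ).ne]
  simp [hstep, mul_comm]

end Endpoints

section Leg

variable {k : ℕ} (hk : 0 < k)

noncomputable def spiderLeg (t : ℝ) : Fin k := ⟨⌊t⌋₊ % k, Nat.mod_lt _ hk⟩

theorem spiderLeg_val {t : ℝ} (ht : t ∈ Set.Ico 0 (k : ℝ)) : (spiderLeg hk t : ℕ) = ⌊t⌋₊ :=
  Nat.mod_eq_of_lt ((Nat.floor_lt ht.1).2 ht.2)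

theorem spiderLeg_monotoneOn : MonotoneOn (spiderLeg hk) (Set.Ico 0 (k : ℝ)) := by
  intro a ha b hb hab
  rw [Fin.le_def, spiderLeg_val hk ha, spiderLeg_val hk hb]
  exact Nat.floor_le_floor hab

theorem spiderLeg_natCast {i : ℕ} (hi : i < k) : spiderLeg hk i = ⟨i, hi⟩ :=
  Fin.ext (by simp [spiderLeg, Nat.mod_eq_of_lt hi])

theorem strictMono_spiderLeg_natCast {n : ℕ} (hn : n ≤ k) :
    StrictMono fun i : Fin n => spiderLeg hk ((i : ℕ) : ℝ) := by
  intro i j hij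
  simp only [spiderLeg_natCast hk (i.is_lt.trans_le hn),
    spiderLeg_natCast hk (j.is_lt.trans_le hn)]
  exact hij

end Leg

/-- The discontinuous curve `ξ : [0,k) → X` on the `k`-spider, equal to the endpoint `1`
of the `i`-th leg for `t ∈ [i−1, i)`, is self-contracted and has length `2(k−1)`. -/
theorem spider_curve_selfContracted_length
    (k : ℕ) (hk : 0 < k) (ξ : ℝ → Fin k × ℝ)
    (hξ : ∀ t : ℝ, ξ t = (⟨⌊t⌋₊ % k, Nat.mod_lt _ hk⟩, (1 : ℝ))) :
    (∀ t₁ t₂ t₃ : ℝ, 0 ≤ t₁ → t₁ ≤ t₂ → t₂ ≤ t₃ → t₃ < (k : ℝ) →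
      spiderDist (ξ t₂) (ξ t₃) ≤ spiderDist (ξ t₁) (ξ t₃)) ∧
    IsLUB {S : ℝ | ∃ (m : ℕ) (t : Fin (m + 1) → ℝ), t 0 = 0 ∧ StrictMono t ∧
        t (Fin.last m) < (k : ℝ) ∧
        S = ∑ i : Fin m, spiderDist (ξ (t i.castSucc)) (ξ (t i.succ))}
      (2 * ((k : ℝ) - 1)) := by
  have hξ' : ∀ t, ξ t = (spiderLeg hk t, 1) := hξ
  simp only [hξ']
  have hmono := spiderLeg_monotoneOn hk
  refine ⟨fun t₁ t₂ t₃ h0 h12 h23 h3 => ?_, IsGreatest.isLUB ⟨?_, ?_⟩⟩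
  · have hmem {t} (h1 : t₁ ≤ t) (h2 : t ≤ t₃) : t ∈ Set.Ico 0 (k : ℝ) :=
      ⟨h0.trans h1, h2.trans_lt h3⟩
    exact spiderDist_endpoints_le_of_le_of_le
      (hmono (hmem le_rfl (h12.trans h23)) (hmem h12 h23) h12)
      (hmono (hmem h12 h23) (hmem (h12.trans h23) le_rfl) h23)
  · refine ⟨k - 1, fun i => ((i : ℕ) : ℝ), by simp, fun i j hij => Nat.cast_lt.2 hij,
      by simp [Nat.cast_sub hk.nat_succ_le], ?_⟩
    rw [sum_spiderDist_endpoints_of_strictMono (strictMono_spiderLeg_natCast hk (by omega)),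
      Nat.cast_sub hk.nat_succ_le, Nat.cast_one]
  · rintro S ⟨m, t, ht0, ht, hlast, rfl⟩
    have hmem (j : Fin (m + 1)) : t j ∈ Set.Ico 0 (k : ℝ) :=
      ⟨ht0 ▸ ht.monotone (Fin.zero_le j), (ht.monotone (Fin.le_last j)).trans_lt hlast⟩
    exact sum_spiderDist_endpoints_le fun a b hab => hmono (hmem a) (hmem b) (ht.monotone hab)
end
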